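/- arXiv:2512.17904 — 6 statements merged into one kernel-verified Lean document; each statement's English description precedes it below -/
import Mathlib

section
/- In a digraph D whose underlying undirected graph is connected, if X is a minimal set of new arcs such that D + X is strongly connected, then for any two distinct strong components U and U' of D, X does not contain both an arc from a vertex of U to a vertex of U' and an arc from a vertex of U' to a vertex of U. -/
def Reach {α : Type*} (A : Set (α × α)) (u v : α) : Prop :=
  Relation.ReflTransGen (fun x y => (x, y) ∈ A) u v

def Strong {α : Type*} (A : Set (α × α)) : Prop := ∀ u v : α, Reach A u v

def SameSCC {α : Type*} (A : Set (α × α)) (u v : α) : Prop := Reach A u v ∧ Reach A v u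

/-- Reachability in the underlying undirected graph. -/
def UndirReach {α : Type*} (A : Set (α × α)) (u v : α) : Prop :=
  Relation.ReflTransGen (fun x y => (x, y) ∈ A ∨ (y, x) ∈ A) u v

lemma reach_mono {α : Type*} {B C : Set (α × α)} (h : B ⊆ C) {x y : α}
    (hr : Reach B x y) : Reach C x y := by
  induction hr with
  | refl => exact Relation.ReflTransGen.refl
  | tail _ hstep ih => exact ih.tail (h hstep)

lemma undir_in {α : Type*} {A : Set (α × α)} {S T : Set α}
    (hS : ∀ x y, x ∈ S → (x, y) ∈ A → y ∈ S)
    (hT : ∀ x y, x ∈ T → (x, y) ∈ A → y ∈ T)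
    (hdisj : ∀ w, w ∈ S → w ∈ T → False)
    (hcover : ∀ z, z ∈ S ∨ z ∈ T) {u v : α}
    (h : UndirReach A u v) (hu : u ∈ S) : v ∈ S := by
  induction h with
  | refl => exact hu
  | tail _ hstep ih =>
    rcases hstep with h | h
    · exact hS _ _ ih h
    · rcases hcover _ with hd | hd
      · exact hd
      · exact absurd (hT _ _ hd h) (fun h' => hdisj _ ih h')

lemma reach_closed {α : Type*} {B : Set (α × α)} {W : Set α}
    (hW : ∀ x y, x ∈ W → (x, y) ∈ B → y ∈ W) {x y : α}
    (hr : Reach B x y) (hx : x ∈ W) : y ∈ W := by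
  induction hr with
  | refl => exact hx
  | tail _ hstep ih => exact hW _ _ ih hstep

/-- If the underlying graph of `D = (V, A)` is connected and `X` is a minimal arc set making
`D + X` strongly connected, then for any two distinct strong components `U` (the component of
`u₁`, with `v₂ ∈ U`) and `U'` (the component of `v₁`, with `u₂ ∈ U'`), `X` cannot contain both
an arc `(u₁, v₁)` from `U` to `U'` and an arc `(u₂, v₂)` from `U'` to `U`. -/
theorem stmt1 {V : Type*} [Fintype V] (A X : Set (V × V))
    (hconn : ∀ u v : V, UndirReach A u v)
    (hstrong : Strong (A ∪ X))
    (hmin : ∀ X' : Set (V × V), X' ⊂ X → ¬ Strong (A ∪ X')) :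
    ∀ u₁ v₁ u₂ v₂ : V, (u₁, v₁) ∈ X → (u₂, v₂) ∈ X →
      ¬ SameSCC A u₁ v₁ → SameSCC A u₁ v₂ → SameSCC A v₁ u₂ → False := by
  intro u₁ v₁ u₂ v₂ ha hb _hnscc h12 h21
  set a : V × V := (u₁, v₁) with ha_def
  set b : V × V := (u₂, v₂) with hb_def
  set B1 : Set (V × V) := A ∪ (X \ {b}) with hB1
  set B2 : Set (V × V) := A ∪ (X \ {a}) with hB2
  have hA1 : A ⊆ B1 := Set.subset_union_left
  have hA2 : A ⊆ B2 := Set.subset_union_left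
  -- Case 1 : u₂ reaches v₂ without arc b
  by_cases h1 : Reach B1 u₂ v₂
  · apply hmin (X \ {b}) ((Set.sdiff_singleton_ssubset).2 hb)
    intro x y
    have hxy := hstrong x y
    induction hxy with
    | refl => exact Relation.ReflTransGen.refl
    | tail _ hstep ih =>
      rename_i c d _
      by_cases hcd : (c, d) = b
      · have hc : c = u₂ := congrArg Prod.fst hcd
        have hd : d = v₂ := congrArg Prod.snd hcd
        subst hc hd
        exact ih.trans h1
      · refine ih.tail ?_
        rcases hstep with h | h
        · exact Or.inl h
        · exact Or.inr ⟨h, hcd⟩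
  -- Case 2 : u₁ reaches v₁ without arc a
  by_cases h2 : Reach B2 u₁ v₁
  · apply hmin (X \ {a}) ((Set.sdiff_singleton_ssubset).2 ha)
    intro x y
    have hxy := hstrong x y
    induction hxy with
    | refl => exact Relation.ReflTransGen.refl
    | tail _ hstep ih =>
      rename_i c d _
      by_cases hcd : (c, d) = a
      · have hc : c = u₁ := congrArg Prod.fst hcd
        have hd : d = v₁ := congrArg Prod.snd hcd
        subst hc hd
        exact ih.trans h2
      · refine ih.tail ?_
        rcases hstep with h | h
        · exact Or.inl h
        · exact Or.inr ⟨h, hcd⟩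
  -- Main case : neither, derive contradiction with connectivity
  set S : Set V := {z | Reach B1 u₂ z} with hS
  set T : Set V := {z | Reach B2 u₁ z} with hT
  have hSclosed : ∀ x y, x ∈ S → (x, y) ∈ B1 → y ∈ S :=
    fun x y hx hxy => Relation.ReflTransGen.tail hx hxy
  have hTclosed : ∀ x y, x ∈ T → (x, y) ∈ B2 → y ∈ T :=
    fun x y hx hxy => Relation.ReflTransGen.tail hx hxy
  have hu₂S : u₂ ∈ S := Relation.ReflTransGen.refl
  have hu₁T : u₁ ∈ T := Relation.ReflTransGen.refl
  have hu₁S : u₁ ∉ S := fun h => h1 (h.trans (reach_mono hA1 h12.1))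
  have hu₂T : u₂ ∉ T := fun h => h2 (h.trans (reach_mono hA2 h21.2))
  have hv₁S : v₁ ∈ S := reach_mono hA1 h21.2
  -- S ∩ T is closed under all arcs, hence empty
  have hdisj : ∀ w, w ∈ S → w ∈ T → False := by
    intro w hwS hwT
    have hWclosed : ∀ x y, x ∈ (S ∩ T : Set V) → (x, y) ∈ A ∪ X → y ∈ (S ∩ T : Set V) := by
      intro x y hx hxy
      by_cases hxa : (x, y) = a
      · have hx1 : x = u₁ := congrArg Prod.fst hxa
        exact absurd (hx1 ▸ hx.1) hu₁S
      by_cases hxb : (x, y) = b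
      · have hx2 : x = u₂ := congrArg Prod.fst hxb
        exact absurd (hx2 ▸ hx.2) hu₂T
      rcases hxy with h | h
      · exact ⟨hSclosed _ _ hx.1 (Or.inl h), hTclosed _ _ hx.2 (Or.inl h)⟩
      · exact ⟨hSclosed _ _ hx.1 (Or.inr ⟨h, hxb⟩), hTclosed _ _ hx.2 (Or.inr ⟨h, hxa⟩)⟩
    have : u₁ ∈ (S ∩ T : Set V) := reach_closed hWclosed (hstrong w u₁) ⟨hwS, hwT⟩
    exact hu₁S this.1
  -- S ∪ T is closed under all arcs, hence covers V (by strong connectivity from u₂)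
  have hcover : ∀ z, z ∈ S ∨ z ∈ T := by
    intro z
    have hUclosed : ∀ x y, x ∈ (S ∪ T : Set V) → (x, y) ∈ A ∪ X → y ∈ (S ∪ T : Set V) := by
      intro x y hx hxy
      rcases hx with hxS | hxT
      · by_cases hxb : (x, y) = b
        · have : y = v₂ := congrArg Prod.snd hxb
          subst this
          exact Or.inr (reach_mono hA2 h12.1)
        · rcases hxy with h | h
          · exact Or.inl (hSclosed _ _ hxS (Or.inl h))
          · exact Or.inl (hSclosed _ _ hxS (Or.inr ⟨h, hxb⟩))
      · by_cases hxa : (x, y) = a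
        · have : y = v₁ := congrArg Prod.snd hxa
          subst this
          exact Or.inl hv₁S
        · rcases hxy with h | h
          · exact Or.inr (hTclosed _ _ hxT (Or.inl h))
          · exact Or.inr (hTclosed _ _ hxT (Or.inr ⟨h, hxa⟩))
    exact reach_closed hUclosed (hstrong u₂ z) (Or.inl hu₂S)
  -- undirected connectivity: the whole undirected path from u₂ stays in S
  exact hu₁S (undir_in (fun x y hx h => hSclosed x y hx (hA1 h))
    (fun x y hx h => hTclosed x y hx (hA2 h)) hdisj hcover (hconn u₂ u₁) hu₂S)
end

section
/- Let D be a plane acyclic digraph, and let (D,k) be an instance asking for at most k new arcs making D strongly connected while remaining plane. If D admits such a solution then the total number of local terminals across all alternating faces of D is strictly less than 8k. -/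
/-- A plane acyclic digraph `D = (V, A)` with face type `F` is abstracted by the angle counts
`lt f` (local terminals around face `f`, at least `2` per face) and `nlt v`
(non-local-terminal angles at vertex `v`), satisfying the angle count identity, Euler's
formula, and the correspondence between terminal vertices (in-degree `0` or out-degree `0`)
and vertices with no non-terminal angle. If `(D, k)` is a positive instance, i.e. some set
`X` of at most `k` new arcs makes `D` strongly connected, then the total number of local
terminals across all alternating faces (faces with `lt f ≥ 4`) is strictly less than `8k`. -/
theorem stmt10 {V F : Type*} [Fintype V] [Fintype F] (A : Set (V × V))
    (hacyc : ∀ x : V, ¬ Relation.TransGen (fun p q => (p, q) ∈ A) x x)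
    (lt : F → ℕ) (nlt : V → ℕ)
    (hA : 1 ≤ A.ncard)
    (hAngles : (∑ v : V, nlt v) + (∑ f : F, lt f) = 2 * A.ncard)
    (hEuler : Fintype.card V + Fintype.card F = A.ncard + 2)
    (hTerm : ∀ v : V, ((∀ u : V, (u, v) ∉ A) ∨ (∀ u : V, (v, u) ∉ A)) ↔ nlt v = 0)
    (hNonTerm : ∀ v : V, nlt v ≠ 0 → 2 ≤ nlt v)
    (hlt2 : ∀ f : F, 2 ≤ lt f)
    (k : ℕ) (X : Finset (V × V)) (hcard : X.card ≤ k)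
    (hstrong : Strong (A ∪ (↑X : Set (V × V)))) :
    (∑ f ∈ Finset.univ.filter (fun f : F => 4 ≤ lt f), lt f) < 8 * k := by
  classical
  obtain ⟨⟨a, b⟩, hab⟩ := Set.nonempty_of_ncard_ne_zero (s := A) (by omega)
  have hne : a ≠ b := by
    rintro rfl; exact hacyc a (Relation.TransGen.single hab)
  have hother : ∀ v : V, ∃ u, u ≠ v := by
    intro v
    by_cases h : a = v
    · exact ⟨b, fun h2 => hne (h.trans h2.symm)⟩
    · exact ⟨a, h⟩
  set Src := Finset.univ.filter (fun v : V => ∀ u, (u, v) ∉ A) with hSrc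
  set Snk := Finset.univ.filter (fun v : V => ∀ u, (v, u) ∉ A) with hSnk
  have hSrcSub : Src ⊆ X.image Prod.snd := by
    intro v hv
    simp only [hSrc, Finset.mem_filter, Finset.mem_univ, true_and] at hv
    obtain ⟨u, hu⟩ := hother v
    rcases (hstrong u v).cases_tail with h | ⟨c, _, hc⟩
    · exact absurd h.symm hu
    · rcases hc with hc | hc
      · exact absurd hc (hv c)
      · exact Finset.mem_image.2 ⟨(c, v), hc, rfl⟩
  have hSnkSub : Snk ⊆ X.image Prod.fst := by
    intro v hv
    simp only [hSnk, Finset.mem_filter, Finset.mem_univ, true_and] at hv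
    obtain ⟨u, hu⟩ := hother v
    rcases (hstrong v u).cases_head with h | ⟨c, hc, _⟩
    · exact absurd h.symm hu
    · rcases hc with hc | hc
      · exact absurd hc (hv c)
      · exact Finset.mem_image.2 ⟨(v, c), hc, rfl⟩
  set Tset := Finset.univ.filter (fun v : V => nlt v = 0) with hTset
  have hTsub : Tset ⊆ Src ∪ Snk := by
    intro v hv
    simp only [hTset, Finset.mem_filter, Finset.mem_univ, true_and] at hv
    rcases (hTerm v).2 hv with h | h
    · exact Finset.mem_union_left _ (by simp [hSrc, h])
    · exact Finset.mem_union_right _ (by simp [hSnk, h])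
  have hT2k : Tset.card ≤ 2 * k := by
    have h1 := Finset.card_le_card hTsub
    have h2 := Finset.card_union_le Src Snk
    have h3 := Finset.card_le_card hSrcSub
    have h4 := Finset.card_le_card hSnkSub
    have h5 := Finset.card_image_le (s := X) (f := Prod.snd)
    have h6 := Finset.card_image_le (s := X) (f := Prod.fst)
    omega
  -- vertex sum bound
  set NT := Finset.univ.filter (fun v : V => ¬ nlt v = 0) with hNT
  have hVcard : Tset.card + NT.card = Fintype.card V := by
    rw [Fintype.card]
    exact Finset.card_filter_add_card_filter_not _
  have hnltsum : 2 * NT.card ≤ ∑ v : V, nlt v := by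
    calc 2 * NT.card = NT.card • 2 := by rw [smul_eq_mul, Nat.mul_comm]
    _ ≤ ∑ v ∈ NT, nlt v := Finset.card_nsmul_le_sum _ _ _
        (fun v hv => hNonTerm v (by simpa [hNT] using (Finset.mem_filter.1 hv).2))
    _ ≤ ∑ v : V, nlt v := Finset.sum_le_sum_of_subset (Finset.subset_univ _)
  -- face sums
  set Alt := Finset.univ.filter (fun f : F => 4 ≤ lt f) with hAlt
  set NAlt := Finset.univ.filter (fun f : F => ¬ 4 ≤ lt f) with hNAlt
  have hFcard : Alt.card + NAlt.card = Fintype.card F := by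
    rw [Fintype.card]
    exact Finset.card_filter_add_card_filter_not _
  have hFsum : (∑ f ∈ Alt, lt f) + (∑ f ∈ NAlt, lt f) = ∑ f : F, lt f := by
    rw [hAlt, hNAlt]
    exact Finset.sum_filter_add_sum_filter_not _ _ _
  have hAltBig : 4 * Alt.card ≤ ∑ f ∈ Alt, lt f := by
    calc 4 * Alt.card = Alt.card • 4 := by rw [smul_eq_mul, Nat.mul_comm]
    _ ≤ ∑ f ∈ Alt, lt f := Finset.card_nsmul_le_sum _ _ _
        (fun f hf => by simpa [hAlt] using (Finset.mem_filter.1 hf).2)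
  have hNAltBig : 2 * NAlt.card ≤ ∑ f ∈ NAlt, lt f := by
    calc 2 * NAlt.card = NAlt.card • 2 := by rw [smul_eq_mul, Nat.mul_comm]
    _ ≤ ∑ f ∈ NAlt, lt f := Finset.card_nsmul_le_sum _ _ _ (fun f _ => hlt2 f)
  omega
end

section
/- Let P = (w_1, …, w_r) be a dipath in an acyclic digraph D, and let X be a set of new arcs, none of which has both endpoints on P, with the property that for some internal vertex v = w_i of P, every arc of X is incident to v and D + X is strongly connected. Then: if in D + X − X_v the strong component Y of v is a source component, then every predecessor u of v on P is also in Y (where X_v denotes the arcs of X incident to v). -/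
def IsSourceComp {α : Type*} (A : Set (α × α)) (v : α) : Prop :=
  ∀ a b : α, (a, b) ∈ A → SameSCC A b v → SameSCC A a v

/-- Let `P = (w 0, …, w (r−1))` be a dipath in an acyclic digraph `D`, let `X` be a set of
new arcs, none having both endpoints on `P`, all incident to the internal vertex `v = w i`
of `P`, with `D + X` strongly connected. Let `D' = D + X − X_v` where `X_v` is the set of
arcs of `X` incident to `v`. If the strong component `Y` of `v` in `D'` is a source
component, then every predecessor `w j` (`j < i`) of `v` on `P` also lies in `Y`. -/
theorem stmt13 {V : Type*} [Fintype V] (A X : Set (V × V))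
    (hacyc : ∀ x : V, ¬ Relation.TransGen (fun p q => (p, q) ∈ A) x x)
    (r : ℕ) (w : ℕ → V)
    (hpath : ∀ j : ℕ, j + 1 < r → (w j, w (j + 1)) ∈ A)
    (i : ℕ) (hi0 : 0 < i) (hir : i + 1 < r)
    (hnoP : ∀ e ∈ X, ¬ ((∃ a < r, w a = Prod.fst e) ∧ (∃ b < r, w b = Prod.snd e)))
    (hinc : ∀ e ∈ X, Prod.fst e = w i ∨ Prod.snd e = w i)
    (hstrong : Strong (A ∪ X)) :
    IsSourceComp ((A ∪ X) \ {e | e ∈ X ∧ (e.1 = w i ∨ e.2 = w i)}) (w i) →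
      ∀ j < i, SameSCC ((A ∪ X) \ {e | e ∈ X ∧ (e.1 = w i ∨ e.2 = w i)}) (w j) (w i) := by
  intro hsrc j hj
  set D' : Set (V × V) := (A ∪ X) \ {e | e ∈ X ∧ (e.1 = w i ∨ e.2 = w i)} with hD'
  -- path arcs stay in D'
  have harc : ∀ j : ℕ, j + 1 < r → (w j, w (j + 1)) ∈ D' := by
    intro j hjr
    refine ⟨Or.inl (hpath j hjr), ?_⟩
    intro ⟨hX, _⟩
    exact hnoP _ hX ⟨⟨j, by omega, rfl⟩, ⟨j + 1, hjr, rfl⟩⟩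
  -- downward induction
  have key : ∀ k : ℕ, k ≤ i → SameSCC D' (w (i - k)) (w i) := by
    intro k
    induction k with
    | zero => intro _; simp only [Nat.sub_zero]; exact ⟨.refl, .refl⟩
    | succ k ih =>
      intro hk
      have h1 : i - (k + 1) + 1 = i - k := by omega
      have h2 : i - (k + 1) + 1 < r := by omega
      have harc' := harc (i - (k + 1)) h2
      rw [h1] at harc'
      exact hsrc _ _ harc' (ih (by omega))
  have := key (i - j) (by omega)
  rwa [show i - (i - j) = j by omega] at this
end

section
/- Let D be a plane oriented graph, F a face of D whose boundary has exactly one local source interval S and one local sink interval T (a simple face), and suppose D[V(F)] is outerplanar. If D restricted to V(F) can be made strongly connected by adding some set of non-crossing arcs inside F (with the result oriented, i.e., no digons), then it can be made strongly connected by adding at most 3 such arcs inside F. -/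
/-- Two chords (with sorted endpoints) of the face boundary cross iff their endpoints
strictly interleave in the boundary order. -/
def ChordCross (p q : ℕ × ℕ) : Prop :=
  (p.1 < q.1 ∧ q.1 < p.2 ∧ p.2 < q.2) ∨ (q.1 < p.1 ∧ p.1 < q.2 ∧ q.2 < p.2)

def sortPair (p : ℕ × ℕ) : ℕ × ℕ := if p.1 ≤ p.2 then p else (p.2, p.1)

/-- The digraph obtained from `D` by adding, for each pair `(i, j)` of boundary positions in
`X`, the arc from `w i` to `w j` (drawn inside the face). -/
def augArcs {V : Type*} (A : Set (V × V)) (w : ℕ → V) (X : Finset (ℕ × ℕ)) : Set (V × V) :=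
  A ∪ {e | ∃ p ∈ X, e = (w p.1, w p.2)}

/-- A digraph is oriented: no loops and no digons. -/
def Oriented {V : Type*} (A : Set (V × V)) : Prop :=
  (∀ x : V, (x, x) ∉ A) ∧ ∀ x y : V, (x, y) ∈ A → (y, x) ∉ A

/-- `X` is a valid augmentation inside the face with boundary `w 0, …, w (r−1)`: its arcs
join boundary positions, are pairwise non-crossing (embeddable inside the face), and the
augmented digraph is still oriented (no digons). -/
def ValidAug {V : Type*} (A : Set (V × V)) (w : ℕ → V) (r : ℕ) (X : Finset (ℕ × ℕ)) : Prop :=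
  (∀ p ∈ X, p.1 < r ∧ p.2 < r) ∧
  (∀ p ∈ X, ∀ q ∈ X, p ≠ q → ¬ ChordCross (sortPair p) (sortPair q)) ∧
  Oriented (augArcs A w X)

section Helpers
variable {V : Type*}

theorem Reach.trans {A : Set (V × V)} {u v x : V} (h1 : Reach A u v) (h2 : Reach A v x) :
    Reach A u x := Relation.ReflTransGen.trans h1 h2

lemma reach_single {A : Set (V × V)} {u v : V} (h : (u, v) ∈ A) : Reach A u v :=
  Relation.ReflTransGen.single h

lemma reach_mono_s16 {A B : Set (V × V)} (h : A ⊆ B) {u v : V} (huv : Reach A u v) : Reach B u v := by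
  induction huv with
  | refl => exact Relation.ReflTransGen.refl
  | tail _ h2 ih => exact Relation.ReflTransGen.tail ih (h h2)

lemma reach_elim {A B : Set (V × V)} (hB : ∀ e ∈ B, Reach A e.1 e.2) {u v : V}
    (h : Reach (A ∪ B) u v) : Reach A u v := by
  induction h with
  | refl => exact Relation.ReflTransGen.refl
  | tail _ harc ih =>
    rcases harc with hA | hb
    · exact Relation.ReflTransGen.tail ih hA
    · exact Relation.ReflTransGen.trans ih (hB _ hb)

lemma exists_exit {A B : Set (V × V)} {C : Set V}
    (hC : ∀ x y, (x, y) ∈ A → x ∈ C → y ∈ C) {u v : V}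
    (h : Reach (A ∪ B) u v) (hu : u ∈ C) : v ∉ C → ∃ e ∈ B, e.1 ∈ C ∧ e.2 ∉ C := by
  induction h with
  | refl => exact fun hv => absurd hu hv
  | @tail p q hup harc ih =>
    intro hv
    by_cases hp : p ∈ C
    · rcases harc with hA | hB'
      · exact absurd (hC _ _ hA hp) hv
      · exact ⟨(p, q), hB', hp, hv⟩
    · exact ih hp

lemma exists_entry {A B : Set (V × V)} {C : Set V}
    (hC : ∀ x y, (x, y) ∈ A → y ∈ C → x ∈ C) {u v : V}
    (h : Reach (A ∪ B) u v) : v ∈ C → u ∉ C → ∃ e ∈ B, e.1 ∉ C ∧ e.2 ∈ C := by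
  induction h with
  | refl => exact fun hv hu => absurd hv hu
  | @tail p q hup harc ih =>
    intro hq hu
    by_cases hp : p ∈ C
    · exact ih hp hu
    · rcases harc with hA | hB'
      · exact absurd (hC _ _ hA hq) hp
      · exact ⟨(p, q), hB', hp, hq⟩

lemma reach_to_src {A B : Set (V × V)} {s : V}
    (hB : ∀ e ∈ B, e.1 = s) {u : V} (h : Reach (A ∪ B) u s) : Reach A u s := by
  induction h using Relation.ReflTransGen.head_induction_on with
  | refl => exact Relation.ReflTransGen.refl
  | @head x y harc hrest ih =>
    rcases harc with hA | hb
    · exact Relation.ReflTransGen.head hA ih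
    · have hx : x = s := hB _ hb
      rw [hx]
      exact Relation.ReflTransGen.refl

lemma reach_sink {A B : Set (V × V)} {s : V}
    (hB : ∀ e ∈ B, e.2 = s) {u v : V} (h : Reach (A ∪ B) u v) :
    Reach A u v ∨ Reach A s v := by
  induction h with
  | @tail p q hup harc ih =>
    rcases harc with hA | hb
    · rcases ih with h' | h'
      · exact Or.inl (Relation.ReflTransGen.tail h' hA)
      · exact Or.inr (Relation.ReflTransGen.tail h' hA)
    · have hq : q = s := hB _ hb
      refine Or.inr ?_
      rw [hq]
      exact Relation.ReflTransGen.refl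
  | refl => exact Or.inl Relation.ReflTransGen.refl

lemma mem_augArcs {A : Set (V × V)} {w : ℕ → V} {X : Finset (ℕ × ℕ)} {p : ℕ × ℕ}
    (hp : p ∈ X) : (w p.1, w p.2) ∈ augArcs A w X := Or.inr ⟨p, hp, rfl⟩

lemma chordCross_ne {a b c d : ℕ} (h : ChordCross (a, b) (c, d)) :
    a ≠ c ∧ a ≠ d ∧ b ≠ c ∧ b ≠ d := by
  have h' : (a < c ∧ c < b ∧ b < d) ∨ (c < a ∧ a < d ∧ d < b) := h
  omega

lemma chordCross_of {a b c d : ℕ} (h : a < c ∧ c < b ∧ b < d) : ChordCross (a, b) (c, d) :=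
  Or.inl h

lemma chordCross_of' {a b c d : ℕ} (h : c < a ∧ a < d ∧ d < b) : ChordCross (a, b) (c, d) :=
  Or.inr h

lemma sortPair_cases (x y : ℕ) : sortPair (x, y) = (x, y) ∨ sortPair (x, y) = (y, x) := by
  unfold sortPair
  split
  · exact Or.inl rfl
  · exact Or.inr rfl

lemma sortPair_of_le {x y : ℕ} (h : x ≤ y) : sortPair (x, y) = (x, y) := by
  unfold sortPair; rw [if_pos h]

lemma sortPair_of_gt {x y : ℕ} (h : y < x) : sortPair (x, y) = (y, x) := by
  unfold sortPair; rw [if_neg (by omega)]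

lemma noncross_shared {x y u v : ℕ} (h : x = u ∨ x = v ∨ y = u ∨ y = v) :
    ¬ ChordCross (sortPair (x, y)) (sortPair (u, v)) := by
  intro hc
  rcases sortPair_cases x y with h1 | h1 <;> rcases sortPair_cases u v with h2 | h2 <;>
    rw [h1, h2] at hc <;>
    obtain ⟨a1, a2, a3, a4⟩ := chordCross_ne hc <;>
    rcases h with rfl | rfl | rfl | rfl <;> simp_all

lemma oriented_mono {S T : Set (V × V)} (h : S ⊆ T) (hT : Oriented T) : Oriented S :=
  ⟨fun x hx => hT.1 x (h hx), fun x y hxy hyx => hT.2 x y (h hxy) (h hyx)⟩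

lemma augArcs_mono {A : Set (V × V)} {w : ℕ → V} {X Y : Finset (ℕ × ℕ)} (h : X ⊆ Y) :
    augArcs A w X ⊆ augArcs A w Y := by
  rintro e (he | ⟨p, hp, rfl⟩)
  · exact Or.inl he
  · exact Or.inr ⟨p, h hp, rfl⟩

lemma validAug_subset {A : Set (V × V)} {w : ℕ → V} {r : ℕ} {X Y : Finset (ℕ × ℕ)}
    (hY : ValidAug A w r Y) (hXY : X ⊆ Y) : ValidAug A w r X :=
  ⟨fun p hp => hY.1 p (hXY hp), fun p hp q hq hpq => hY.2.1 p (hXY hp) q (hXY hq) hpq,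
   oriented_mono (augArcs_mono hXY) hY.2.2⟩

lemma oriented_union {A B : Set (V × V)} (hA : Oriented A)
    (h1 : ∀ x : V, (x, x) ∉ B) (h2 : ∀ x y : V, (x, y) ∈ B → (y, x) ∉ B)
    (h3 : ∀ x y : V, (x, y) ∈ A → (y, x) ∉ B) : Oriented (A ∪ B) := by
  constructor
  · rintro x (h | h)
    · exact hA.1 x h
    · exact h1 x h
  · rintro x y (h | h) (h' | h')
    · exact hA.2 x y h h'
    · exact h3 x y h h'
    · exact h3 y x h' h
    · exact h2 x y h h'

lemma validAug_explicit {A : Set (V × V)} {w : ℕ → V} {r : ℕ} (X : Finset (ℕ × ℕ))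
    (hOr : Oriented A)
    (hb : ∀ p ∈ X, p.1 < r ∧ p.2 < r)
    (hnc : ∀ p ∈ X, ∀ q ∈ X, p ≠ q → ¬ ChordCross (sortPair p) (sortPair q))
    (hloop : ∀ p ∈ X, w p.1 ≠ w p.2)
    (hdigA : ∀ p ∈ X, (w p.2, w p.1) ∉ A)
    (hdigX : ∀ p ∈ X, ∀ q ∈ X, w p.1 = w q.2 → w p.2 = w q.1 → False) :
    ValidAug A w r X := by
  refine ⟨hb, hnc, ?_⟩
  apply oriented_union hOr
  · rintro x ⟨p, hp, he⟩
    have h1 : x = w p.1 := congrArg Prod.fst he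
    have h2 : x = w p.2 := congrArg Prod.snd he
    exact hloop p hp (h1.symm.trans h2)
  · rintro x y ⟨p, hp, hep⟩ ⟨q, hq, heq⟩
    have h1 : x = w p.1 := congrArg Prod.fst hep
    have h2 : y = w p.2 := congrArg Prod.snd hep
    have h3 : y = w q.1 := congrArg Prod.fst heq
    have h4 : x = w q.2 := congrArg Prod.snd heq
    exact hdigX p hp q hq (h1.symm.trans h4) (h2.symm.trans h3)
  · rintro x y hA ⟨q, hq, heq⟩
    have h1 : y = w q.1 := congrArg Prod.fst heq
    have h2 : x = w q.2 := congrArg Prod.snd heq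
    exact hdigA q hq (by rw [← h2, ← h1]; exact hA)

lemma card_le3_1 (x : ℕ × ℕ) : ({x} : Finset (ℕ × ℕ)).card ≤ 3 := by simp

lemma card_le3_2 (x y : ℕ × ℕ) : ({x, y} : Finset (ℕ × ℕ)).card ≤ 3 := by
  have h1 := Finset.card_insert_le x ({y} : Finset (ℕ × ℕ))
  have h2 : ({y} : Finset (ℕ × ℕ)).card = 1 := Finset.card_singleton y
  omega

lemma card_le3_3 (x y z : ℕ × ℕ) : ({x, y, z} : Finset (ℕ × ℕ)).card ≤ 3 := by
  have h0 := Finset.card_insert_le y ({z} : Finset (ℕ × ℕ))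
  have h1 := Finset.card_insert_le x ({y, z} : Finset (ℕ × ℕ))
  have h2 : ({z} : Finset (ℕ × ℕ)).card = 1 := Finset.card_singleton z
  omega

end Helpers

/-- Let `F` be a simple face of a plane oriented graph `D`, with boundary
`w 0, …, w (r−1)` decomposed into a local source strong interval `S` (positions `≤ a`), an
interval dipath `P₁` (positions in `(a, b)`), a local sink strong interval `T` (positions in
`[b, c]`) and an interval dipath `P₂` (positions in `(c, r)`), with the stated reachability
properties, and with `D[V(F)]` outerplanar (`houter`). If some set of non-crossing new arcs
inside `F`, keeping the graph oriented, makes `V(F)` strongly connected, then some such set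
of at most `3` arcs does. -/
theorem stmt16 {V : Type*} [Fintype V] (A : Set (V × V)) (hOr : Oriented A)
    (r : ℕ) (w : ℕ → V) (a b c : ℕ)
    (hab : a < b) (hbc : b ≤ c) (hcr : c < r)
    (houter : ∀ i j k l : ℕ, i < r → j < r → k < r → l < r →
      (w i, w j) ∈ A → (w k, w l) ∈ A → ¬ ChordCross (sortPair (i, j)) (sortPair (k, l)))
    (hS : ∀ i j : ℕ, i ≤ a → j ≤ a → SameSCC A (w i) (w j))
    (hT : ∀ i j : ℕ, b ≤ i → i ≤ c → b ≤ j → j ≤ c → SameSCC A (w i) (w j))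
    (hP1 : ∀ i j : ℕ, a < i → i ≤ j → j < b → Reach A (w i) (w j))
    (hSP1 : ∀ i j : ℕ, i ≤ a → a < j → j < b → Reach A (w i) (w j))
    (hP1T : ∀ i j : ℕ, a < i → i < b → b ≤ j → j ≤ c → Reach A (w i) (w j))
    (hP2 : ∀ i j : ℕ, c < i → i ≤ j → j < r → Reach A (w j) (w i))
    (hSP2 : ∀ i j : ℕ, i ≤ a → c < j → j < r → Reach A (w i) (w j))
    (hP2T : ∀ i j : ℕ, c < i → i < r → b ≤ j → j ≤ c → Reach A (w i) (w j))
    (hEx : ∃ X : Finset (ℕ × ℕ), ValidAug A w r X ∧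
      ∀ i j : ℕ, i < r → j < r → Reach (augArcs A w X) (w i) (w j)) :
    ∃ X : Finset (ℕ × ℕ), ValidAug A w r X ∧ X.card ≤ 3 ∧
      ∀ i j : ℕ, i < r → j < r → Reach (augArcs A w X) (w i) (w j) := by
  classical
  have hbr : b < r := lt_of_le_of_lt hbc hcr
  have har : a < r := lt_trans hab hbr
  have h0r : 0 < r := lt_of_le_of_lt (Nat.zero_le a) har
  have RL : ∀ (X : Finset (ℕ × ℕ)) {u v : V}, Reach A u v → Reach (augArcs A w X) u v :=
    fun X _ _ h => reach_mono_s16 Set.subset_union_left h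
  -- master builder: it suffices to connect w a → w b and w b → w 0 in the augmentation
  have build : ∀ X : Finset (ℕ × ℕ), ValidAug A w r X → X.card ≤ 3 →
      Reach (augArcs A w X) (w a) (w b) → Reach (augArcs A w X) (w b) (w 0) →
      ∃ X : Finset (ℕ × ℕ), ValidAug A w r X ∧ X.card ≤ 3 ∧
        ∀ i j : ℕ, i < r → j < r → Reach (augArcs A w X) (w i) (w j) := by
    intro X hv hc h1 h2
    refine ⟨X, hv, hc, fun i j hi hj => ?_⟩
    have toB : Reach (augArcs A w X) (w i) (w b) := by
      rcases le_or_gt i a with h | h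
      · exact (RL X (hS i a h le_rfl).1).trans h1
      · rcases lt_or_ge i b with h' | h'
        · exact RL X (hP1T i b h h' le_rfl hbc)
        · rcases le_or_gt i c with h'' | h''
          · exact RL X (hT i b h' h'' le_rfl hbc).1
          · exact RL X (hP2T i b h'' hi le_rfl hbc)
    have fromB : Reach (augArcs A w X) (w b) (w j) := by
      rcases le_or_gt j a with h | h
      · exact h2.trans (RL X (hS 0 j (Nat.zero_le a) h).1)
      · rcases lt_or_ge j b with h' | h'
        · exact h2.trans (RL X (hSP1 0 j (Nat.zero_le a) h h'))
        · rcases le_or_gt j c with h'' | h''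
          · exact RL X (hT b j le_rfl hbc h' h'').1
          · exact h2.trans (RL X (hSP2 0 j (Nat.zero_le a) h'' hj))
    exact toB.trans fromB
  by_cases HST : Reach A (w a) (w b)
  · by_cases HTS : Reach A (w b) (w 0)
    · -- both connections already present: empty augmentation
      refine build ∅ ⟨by simp, by simp, ?_⟩ (by simp) (RL ∅ HST) (RL ∅ HTS)
      have he : augArcs A w (∅ : Finset (ℕ × ℕ)) = A := by
        ext e
        constructor
        · rintro (h | ⟨p, hp, _⟩)
          · exact h
          · simp at hp
        · exact fun h => Or.inl h
      rw [he]; exact hOr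
    · -- CASE 3 : HST holds, need T ⇝ S
      by_cases h3a : ∃ x y : ℕ, x < r ∧ y < r ∧ Reach A (w b) (w x) ∧ Reach A (w y) (w 0) ∧
          (w y, w x) ∉ A
      · obtain ⟨x, y, hx, hy, hbx, hy0, hnA⟩ := h3a
        have hne : w x ≠ w y := fun h => HTS (hbx.trans (by rw [h]; exact hy0))
        refine build {(x, y)} (validAug_explicit _ hOr ?_ ?_ ?_ ?_ ?_) (card_le3_1 _)
          (RL _ HST) ?_
        · intro p hp; simp at hp; subst hp; exact ⟨hx, hy⟩
        · intro p hp q hq hne'; simp at hp hq; subst hp; subst hq; exact absurd rfl hne'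
        · intro p hp; simp at hp; subst hp; exact hne
        · intro p hp; simp at hp; subst hp; exact hnA
        · intro p hp q hq; simp at hp hq; subst hp; subst hq; intro h1 _; exact hne h1
        · exact (RL _ hbx).trans ((reach_single (mem_augArcs (p := (x, y)) (by simp))).trans
            (RL _ hy0))
      · push_neg at h3a
        obtain ⟨X₀, hX₀v, hX₀r⟩ := hEx
        have hOr₀ : Oriented (augArcs A w X₀) := hX₀v.2.2
        have h0b : (w 0, w b) ∈ A :=
          h3a b 0 hbr h0r Relation.ReflTransGen.refl Relation.ReflTransGen.refl
        have hopfree : ∀ u v : ℕ, a < u → u < b → c < v → v < r →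
            (w u, w v) ∉ A ∧ (w v, w u) ∉ A := by
          intro u v h1 h2 h3 h4
          constructor
          · intro hA
            exact houter u v 0 b (by omega) (by omega) h0r hbr hA h0b
              (by rw [sortPair_of_le (by omega : u ≤ v), sortPair_of_le (Nat.zero_le b)]
                  exact chordCross_of' ⟨by omega, by omega, by omega⟩)
          · intro hA
            exact houter v u 0 b (by omega) (by omega) h0r hbr hA h0b
              (by rw [sortPair_of_gt (by omega : u < v), sortPair_of_le (Nat.zero_le b)]
                  exact chordCross_of' ⟨by omega, by omega, by omega⟩)
        -- first arc leaving the set reachable from w b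
        obtain ⟨e1, he1B, he1C, he1nC⟩ :=
          exists_exit (B := {e | ∃ p ∈ X₀, e = (w p.1, w p.2)})
            (C := {v : V | Reach A (w b) v})
            (fun x y hxy hx => Relation.ReflTransGen.tail hx hxy)
            (hX₀r b 0 hbr h0r) Relation.ReflTransGen.refl HTS
        obtain ⟨⟨p1, q1⟩, hp1X, rfl⟩ := he1B
        have hRbp1 : Reach A (w b) (w p1) := he1C
        have hnRbq1 : ¬ Reach A (w b) (w q1) := he1nC
        have hp1r : p1 < r := (hX₀v.1 _ hp1X).1
        have hq1r : q1 < r := (hX₀v.1 _ hp1X).2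
        have harc1 : (w p1, w q1) ∈ augArcs A w X₀ := Or.inr ⟨(p1, q1), hp1X, rfl⟩
        have hd1 : (w q1, w p1) ∉ A := fun h => hOr₀.2 _ _ harc1 (Or.inl h)
        have hnq10 : ¬ Reach A (w q1) (w 0) := fun h => hd1 (h3a p1 q1 hp1r hq1r hRbp1 h)
        -- last arc entering the set co-reachable to w 0
        obtain ⟨e2, he2B, he2nC, he2C⟩ :=
          exists_entry (B := {e | ∃ p ∈ X₀, e = (w p.1, w p.2)})
            (C := {v : V | Reach A v (w 0)})
            (fun x y hxy hy => Relation.ReflTransGen.head hxy hy)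
            (hX₀r b 0 hbr h0r) Relation.ReflTransGen.refl HTS
        obtain ⟨⟨pm, qm⟩, hpmX, rfl⟩ := he2B
        have hnRpm0 : ¬ Reach A (w pm) (w 0) := he2nC
        have hRqm0 : Reach A (w qm) (w 0) := he2C
        have hpmr : pm < r := (hX₀v.1 _ hpmX).1
        have hqmr : qm < r := (hX₀v.1 _ hpmX).2
        have harcm : (w pm, w qm) ∈ augArcs A w X₀ := Or.inr ⟨(pm, qm), hpmX, rfl⟩
        have hdm : (w qm, w pm) ∉ A := fun h => hOr₀.2 _ _ harcm (Or.inl h)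
        have hnbpm : ¬ Reach A (w b) (w pm) := fun h => hdm (h3a pm qm hpmr hqmr h hRqm0)
        have hl1 : w p1 ≠ w q1 := by
          intro h; rw [h] at harc1; exact hOr₀.1 _ harc1
        have hlm : w pm ≠ w qm := by
          intro h; rw [h] at harcm; exact hOr₀.1 _ harcm
        have hq1K : (a < q1 ∧ q1 < b) ∨ (c < q1 ∧ q1 < r) := by
          rcases le_or_gt q1 a with h | h
          · exact absurd (hS q1 0 h (Nat.zero_le a)).1 hnq10
          · rcases lt_or_ge q1 b with h' | h'
            · exact Or.inl ⟨h, h'⟩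
            · rcases le_or_gt q1 c with h'' | h''
              · exact absurd (hT b q1 le_rfl hbc h' h'').1 hnRbq1
              · exact Or.inr ⟨h'', hq1r⟩
        have hpmK : (a < pm ∧ pm < b) ∨ (c < pm ∧ pm < r) := by
          rcases le_or_gt pm a with h | h
          · exact absurd (hS pm 0 h (Nat.zero_le a)).1 hnRpm0
          · rcases lt_or_ge pm b with h' | h'
            · exact Or.inl ⟨h, h'⟩
            · rcases le_or_gt pm c with h'' | h''
              · exact absurd (hT b pm le_rfl hbc h' h'').1 hnbpm
              · exact Or.inr ⟨h'', hpmr⟩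
        by_cases hmid : Reach A (w q1) (w pm)
        · refine build {(p1, q1), (pm, qm)}
            (validAug_subset hX₀v (by
              intro e he; simp at he; rcases he with rfl | rfl
              exacts [hp1X, hpmX]))
            (card_le3_2 _ _) (RL _ HST) ?_
          exact (RL _ hRbp1).trans ((reach_single (mem_augArcs (p := (p1, q1)) (by simp))).trans
            ((RL _ hmid).trans ((reach_single (mem_augArcs (p := (pm, qm)) (by simp))).trans
              (RL _ hRqm0))))
        · have hneq : w q1 ≠ w pm := fun h =>
            hmid (by rw [h]; exact Relation.ReflTransGen.refl)
          by_cases h01 : (w 0, w q1) ∈ A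
          · by_cases hpmb : (w pm, w b) ∈ A
            · rcases hq1K with ⟨hq1a, hq1b⟩ | ⟨hq1c, hq1rr⟩ <;>
                rcases hpmK with ⟨hpma, hpmb'⟩ | ⟨hpmc, hpmrr⟩
              · -- both in P1 : contradiction
                exfalso
                rcases lt_trichotomy q1 pm with hlt | heq | hgt
                · exact hmid (hP1 q1 pm hq1a (le_of_lt hlt) hpmb')
                · exact hmid (by rw [heq]; exact Relation.ReflTransGen.refl)
                · exact houter 0 q1 pm b h0r hq1r (by omega) hbr h01 hpmb
                    (by rw [sortPair_of_le (Nat.zero_le q1), sortPair_of_le (by omega : pm ≤ b)]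
                        exact chordCross_of ⟨by omega, hgt, hq1b⟩)
              · -- q1 ∈ P1, pm ∈ P2 : 3-arc solution
                have hop := hopfree q1 pm hq1a hq1b hpmc hpmrr
                refine build {(p1, q1), (q1, pm), (pm, qm)}
                  (validAug_explicit _ hOr ?_ ?_ ?_ ?_ ?_) (card_le3_3 _ _ _) (RL _ HST) ?_
                · intro p hp; simp at hp
                  rcases hp with rfl | rfl | rfl
                  exacts [⟨hp1r, hq1r⟩, ⟨hq1r, hpmr⟩, ⟨hpmr, hqmr⟩]
                · intro p hp q hq hne
                  simp at hp hq
                  rcases hp with rfl | rfl | rfl <;> rcases hq with rfl | rfl | rfl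
                  · exact absurd rfl hne
                  · exact noncross_shared (by omega)
                  · exact hX₀v.2.1 _ hp1X _ hpmX (by
                      intro hE; rw [Prod.mk.injEq] at hE
                      exact hnbpm (by rw [← hE.1]; exact hRbp1))
                  · exact noncross_shared (by omega)
                  · exact absurd rfl hne
                  · exact noncross_shared (by omega)
                  · exact hX₀v.2.1 _ hpmX _ hp1X (by
                      intro hE; rw [Prod.mk.injEq] at hE
                      exact hnbpm (by rw [hE.1]; exact hRbp1))
                  · exact noncross_shared (by omega)
                  · exact absurd rfl hne
                · intro p hp; simp at hp
                  rcases hp with rfl | rfl | rfl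
                  exacts [hl1, hneq, hlm]
                · intro p hp; simp at hp
                  rcases hp with rfl | rfl | rfl
                  exacts [hd1, hop.2, hdm]
                · intro p hp q hq
                  simp at hp hq
                  rcases hp with rfl | rfl | rfl <;> rcases hq with rfl | rfl | rfl <;>
                    intro h1 h2
                  · exact hl1 h1
                  · exact hnbpm (by rw [← h1]; exact hRbp1)
                  · exact hneq h2
                  · exact hnbpm (by rw [h2]; exact hRbp1)
                  · exact hneq h1
                  · exact hnq10 (by rw [h1]; exact hRqm0)
                  · exact hneq h1.symm
                  · exact hnq10 (by rw [← h2]; exact hRqm0)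
                  · exact hnRpm0 (by rw [h1]; exact hRqm0)
                · exact (RL _ hRbp1).trans
                    ((reach_single (mem_augArcs (p := (p1, q1)) (by simp))).trans
                    ((reach_single (mem_augArcs (p := (q1, pm)) (by simp))).trans
                    ((reach_single (mem_augArcs (p := (pm, qm)) (by simp))).trans
                      (RL _ hRqm0))))
              · -- q1 ∈ P2, pm ∈ P1 : 3-arc solution
                have hop := hopfree pm q1 hpma hpmb' hq1c hq1rr
                refine build {(p1, q1), (q1, pm), (pm, qm)}
                  (validAug_explicit _ hOr ?_ ?_ ?_ ?_ ?_) (card_le3_3 _ _ _) (RL _ HST) ?_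
                · intro p hp; simp at hp
                  rcases hp with rfl | rfl | rfl
                  exacts [⟨hp1r, hq1r⟩, ⟨hq1r, hpmr⟩, ⟨hpmr, hqmr⟩]
                · intro p hp q hq hne
                  simp at hp hq
                  rcases hp with rfl | rfl | rfl <;> rcases hq with rfl | rfl | rfl
                  · exact absurd rfl hne
                  · exact noncross_shared (by omega)
                  · exact hX₀v.2.1 _ hp1X _ hpmX (by
                      intro hE; rw [Prod.mk.injEq] at hE
                      exact hnbpm (by rw [← hE.1]; exact hRbp1))
                  · exact noncross_shared (by omega)
                  · exact absurd rfl hne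
                  · exact noncross_shared (by omega)
                  · exact hX₀v.2.1 _ hpmX _ hp1X (by
                      intro hE; rw [Prod.mk.injEq] at hE
                      exact hnbpm (by rw [hE.1]; exact hRbp1))
                  · exact noncross_shared (by omega)
                  · exact absurd rfl hne
                · intro p hp; simp at hp
                  rcases hp with rfl | rfl | rfl
                  exacts [hl1, hneq, hlm]
                · intro p hp; simp at hp
                  rcases hp with rfl | rfl | rfl
                  exacts [hd1, hop.1, hdm]
                · intro p hp q hq
                  simp at hp hq
                  rcases hp with rfl | rfl | rfl <;> rcases hq with rfl | rfl | rfl <;>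
                    intro h1 h2
                  · exact hl1 h1
                  · exact hnbpm (by rw [← h1]; exact hRbp1)
                  · exact hneq h2
                  · exact hnbpm (by rw [h2]; exact hRbp1)
                  · exact hneq h1
                  · exact hnq10 (by rw [h1]; exact hRqm0)
                  · exact hneq h1.symm
                  · exact hnq10 (by rw [← h2]; exact hRqm0)
                  · exact hnRpm0 (by rw [h1]; exact hRqm0)
                · exact (RL _ hRbp1).trans
                    ((reach_single (mem_augArcs (p := (p1, q1)) (by simp))).trans
                    ((reach_single (mem_augArcs (p := (q1, pm)) (by simp))).trans
                    ((reach_single (mem_augArcs (p := (pm, qm)) (by simp))).trans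
                      (RL _ hRqm0))))
              · -- both in P2 : contradiction
                exfalso
                rcases le_or_gt pm q1 with hle | hlt
                · exact hmid (hP2 pm q1 hpmc hle hq1rr)
                · exact houter 0 q1 pm b h0r hq1r (by omega) hbr h01 hpmb
                    (by rw [sortPair_of_le (Nat.zero_le q1), sortPair_of_gt (by omega : b < pm)]
                        exact chordCross_of ⟨by omega, by omega, hlt⟩)
            · -- (w pm, w b) ∉ A : solution {(b, pm), (pm, qm)}
              have hlbpm : w b ≠ w pm := fun h =>
                hnbpm (by rw [← h]; exact Relation.ReflTransGen.refl)
              refine build {(b, pm), (pm, qm)}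
                (validAug_explicit _ hOr ?_ ?_ ?_ ?_ ?_) (card_le3_2 _ _) (RL _ HST) ?_
              · intro p hp; simp at hp
                rcases hp with rfl | rfl
                exacts [⟨hbr, hpmr⟩, ⟨hpmr, hqmr⟩]
              · intro p hp q hq hne
                simp at hp hq
                rcases hp with rfl | rfl <;> rcases hq with rfl | rfl
                · exact absurd rfl hne
                · exact noncross_shared (by omega)
                · exact noncross_shared (by omega)
                · exact absurd rfl hne
              · intro p hp; simp at hp
                rcases hp with rfl | rfl
                exacts [hlbpm, hlm]
              · intro p hp; simp at hp
                rcases hp with rfl | rfl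
                exacts [hpmb, hdm]
              · intro p hp q hq
                simp at hp hq
                rcases hp with rfl | rfl <;> rcases hq with rfl | rfl <;> intro h1 h2
                · exact hlbpm h1
                · exact HTS (by rw [h1]; exact hRqm0)
                · exact HTS (by rw [← h2]; exact hRqm0)
                · exact hnRpm0 (by rw [h1]; exact hRqm0)
              · exact (reach_single (mem_augArcs (p := (b, pm)) (by simp))).trans
                  ((reach_single (mem_augArcs (p := (pm, qm)) (by simp))).trans (RL _ hRqm0))
          · -- (w 0, w q1) ∉ A : solution {(p1, q1), (q1, 0)}
            have hlq10 : w q1 ≠ w 0 := fun h =>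
              hnq10 (by rw [h]; exact Relation.ReflTransGen.refl)
            refine build {(p1, q1), (q1, 0)}
              (validAug_explicit _ hOr ?_ ?_ ?_ ?_ ?_) (card_le3_2 _ _) (RL _ HST) ?_
            · intro p hp; simp at hp
              rcases hp with rfl | rfl
              exacts [⟨hp1r, hq1r⟩, ⟨hq1r, h0r⟩]
            · intro p hp q hq hne
              simp at hp hq
              rcases hp with rfl | rfl <;> rcases hq with rfl | rfl
              · exact absurd rfl hne
              · exact noncross_shared (by omega)
              · exact noncross_shared (by omega)
              · exact absurd rfl hne
            · intro p hp; simp at hp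
              rcases hp with rfl | rfl
              exacts [hl1, hlq10]
            · intro p hp; simp at hp
              rcases hp with rfl | rfl
              exacts [hd1, h01]
            · intro p hp q hq
              simp at hp hq
              rcases hp with rfl | rfl <;> rcases hq with rfl | rfl <;> intro h1 h2
              · exact hl1 h1
              · exact HTS (by rw [← h1]; exact hRbp1)
              · exact HTS (by rw [h2]; exact hRbp1)
              · exact hlq10 h1
            · exact (RL _ hRbp1).trans
                ((reach_single (mem_augArcs (p := (p1, q1)) (by simp))).trans
                  (reach_single (mem_augArcs (p := (q1, 0)) (by simp))))
  · -- ¬HST : then P1 and P2 are empty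
    have hba : b = a + 1 := by
      by_contra h
      exact HST ((hSP1 a (a + 1) le_rfl (by omega) (by omega)).trans
        (hP1T (a + 1) b (by omega) (by omega) le_rfl hbc))
    have hrc : r = c + 1 := by
      by_contra h
      exact HST ((hSP2 a (c + 1) le_rfl (by omega) (by omega)).trans
        (hP2T (c + 1) b (by omega) (by omega) le_rfl hbc))
    by_cases HTS : Reach A (w b) (w 0)
    · -- CASE 4 : need only S ⇝ T
      by_cases h4 : ∃ p q : ℕ, p ≤ a ∧ b ≤ q ∧ q ≤ c ∧ (w q, w p) ∉ A
      · obtain ⟨p, q, hpa, hbq, hqc, hnA⟩ := h4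
        have hne : w p ≠ w q := fun h =>
          HST ((hS a p le_rfl hpa).1.trans (by rw [h]; exact (hT q b hbq hqc le_rfl hbc).1))
        refine build {(p, q)} (validAug_explicit _ hOr ?_ ?_ ?_ ?_ ?_) (card_le3_1 _)
          ?_ (RL _ HTS)
        · intro p' hp'; simp at hp'; subst hp'; exact ⟨by omega, by omega⟩
        · intro p' hp' q' hq' hne'; simp at hp' hq'; subst hp'; subst hq'; exact absurd rfl hne'
        · intro p' hp'; simp at hp'; subst hp'; exact hne
        · intro p' hp'; simp at hp'; subst hp'; exact hnA
        · intro p' hp' q' hq'; simp at hp' hq'; subst hp'; subst hq'; intro h1 _; exact hne h1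
        · exact (RL _ (hS a p le_rfl hpa).1).trans
            ((reach_single (mem_augArcs (p := (p, q)) (by simp))).trans
              (RL _ (hT q b hbq hqc le_rfl hbc).1))
      · push_neg at h4
        exfalso
        obtain ⟨X₀, hX₀v, hX₀r⟩ := hEx
        have hred : ∀ e ∈ ({e : V × V | ∃ p ∈ X₀, e = (w p.1, w p.2)} : Set (V × V)),
            Reach A e.1 e.2 := by
          rintro e ⟨⟨p, q⟩, hpq, rfl⟩
          have hpr : p < r := (hX₀v.1 _ hpq).1
          have hqr : q < r := (hX₀v.1 _ hpq).2
          rcases le_or_gt p a with hp | hp <;> rcases le_or_gt q a with hq | hq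
          · exact (hS p q hp hq).1
          · exfalso
            have hA' : (w q, w p) ∈ A := h4 p q hp (by omega) (by omega)
            exact hX₀v.2.2.2 (w p) (w q) (Or.inr ⟨(p, q), hpq, rfl⟩) (Or.inl hA')
          · exact reach_single (h4 q p hq (by omega) (by omega))
          · exact (hT p q (by omega) (by omega) (by omega) (by omega)).1
        exact HST (reach_elim hred (hX₀r a b har hbr))
    · -- CASE 5 : neither direction present
      by_cases h5q : ∃ q : ℕ, b ≤ q ∧ q ≤ c ∧ w q ≠ w b
      · obtain ⟨q, hbq, hqc, hne⟩ := h5q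
        have hd1 : (w q, w 0) ∉ A := fun hA =>
          HTS ((hT b q le_rfl hbc hbq hqc).1.trans (reach_single hA))
        have hd2 : (w 0, w b) ∉ A := fun hA =>
          HST ((hS a 0 le_rfl (Nat.zero_le a)).1.trans (reach_single hA))
        have hl1 : w 0 ≠ w q := fun h =>
          HST ((hS a 0 le_rfl (Nat.zero_le a)).1.trans
            (by rw [h]; exact (hT q b hbq hqc le_rfl hbc).1))
        have hl2 : w b ≠ w 0 := fun h => HTS (by rw [h]; exact Relation.ReflTransGen.refl)
        refine build {(0, q), (b, 0)} (validAug_explicit _ hOr ?_ ?_ ?_ ?_ ?_) (card_le3_2 _ _)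
          ?_ ?_
        · intro p hp; simp at hp
          rcases hp with rfl | rfl
          exacts [⟨h0r, by omega⟩, ⟨hbr, h0r⟩]
        · intro p hp q' hq' hne'
          simp at hp hq'
          rcases hp with rfl | rfl <;> rcases hq' with rfl | rfl
          · exact absurd rfl hne'
          · exact noncross_shared (by omega)
          · exact noncross_shared (by omega)
          · exact absurd rfl hne'
        · intro p hp; simp at hp
          rcases hp with rfl | rfl
          exacts [hl1, hl2]
        · intro p hp; simp at hp
          rcases hp with rfl | rfl
          exacts [hd1, hd2]
        · intro p hp q' hq'
          simp at hp hq'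
          rcases hp with rfl | rfl <;> rcases hq' with rfl | rfl <;> intro h1 h2
          · exact hl1 h1
          · exact hne h2
          · exact hne h1.symm
          · exact hl2 h1
        · exact (RL _ (hS a 0 le_rfl (Nat.zero_le a)).1).trans
            ((reach_single (mem_augArcs (p := (0, q)) (by simp))).trans
              (RL _ (hT q b hbq hqc le_rfl hbc).1))
        · exact reach_single (mem_augArcs (p := (b, 0)) (by simp))
      · push_neg at h5q
        by_cases h5p : ∃ p : ℕ, p ≤ a ∧ w p ≠ w 0
        · obtain ⟨p, hpa, hne⟩ := h5p
          have hd1 : (w b, w p) ∉ A := fun hA =>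
            HTS ((reach_single hA).trans (hS p 0 hpa (Nat.zero_le a)).1)
          have hd2 : (w 0, w b) ∉ A := fun hA =>
            HST ((hS a 0 le_rfl (Nat.zero_le a)).1.trans (reach_single hA))
          have hl1 : w p ≠ w b := fun h =>
            HST ((hS a p le_rfl hpa).1.trans (by rw [h]; exact Relation.ReflTransGen.refl))
          have hl2 : w b ≠ w 0 := fun h => HTS (by rw [h]; exact Relation.ReflTransGen.refl)
          refine build {(p, b), (b, 0)} (validAug_explicit _ hOr ?_ ?_ ?_ ?_ ?_)
            (card_le3_2 _ _) ?_ ?_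
          · intro p' hp'; simp at hp'
            rcases hp' with rfl | rfl
            exacts [⟨by omega, hbr⟩, ⟨hbr, h0r⟩]
          · intro p' hp' q' hq' hne'
            simp at hp' hq'
            rcases hp' with rfl | rfl <;> rcases hq' with rfl | rfl
            · exact absurd rfl hne'
            · exact noncross_shared (by omega)
            · exact noncross_shared (by omega)
            · exact absurd rfl hne'
          · intro p' hp'; simp at hp'
            rcases hp' with rfl | rfl
            exacts [hl1, hl2]
          · intro p' hp'; simp at hp'
            rcases hp' with rfl | rfl
            exacts [hd1, hd2]
          · intro p' hp' q' hq'
            simp at hp' hq'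
            rcases hp' with rfl | rfl <;> rcases hq' with rfl | rfl <;> intro h1 h2
            · exact hl1 h1
            · exact hne h1
            · exact hne h2.symm
            · exact hl2 h1
          · exact (RL _ (hS a p le_rfl hpa).1).trans
              (reach_single (mem_augArcs (p := (p, b)) (by simp)))
          · exact reach_single (mem_augArcs (p := (b, 0)) (by simp))
        · push_neg at h5p
          exfalso
          obtain ⟨X₀, hX₀v, hX₀r⟩ := hEx
          have hOr₀ : Oriented (augArcs A w X₀) := hX₀v.2.2
          have hvert : ∀ e ∈ ({e : V × V | ∃ p ∈ X₀, e = (w p.1, w p.2)} : Set (V × V)),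
              (e.1 = w 0 ∨ e.1 = w b) ∧ (e.2 = w 0 ∨ e.2 = w b) := by
            rintro e ⟨⟨p, q⟩, hpq, rfl⟩
            have hpr : p < r := (hX₀v.1 _ hpq).1
            have hqr : q < r := (hX₀v.1 _ hpq).2
            constructor
            · rcases le_or_gt p a with h | h
              · exact Or.inl (h5p p h)
              · exact Or.inr (h5q p (by omega) (by omega))
            · rcases le_or_gt q a with h | h
              · exact Or.inl (h5p q h)
              · exact Or.inr (h5q q (by omega) (by omega))
          by_cases hst : ((w b, w 0) : V × V) ∈ ({e : V × V | ∃ p ∈ X₀, e = (w p.1, w p.2)} : Set (V × V))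
          · by_cases hst2 : ((w 0, w b) : V × V) ∈ ({e : V × V | ∃ p ∈ X₀, e = (w p.1, w p.2)} : Set (V × V))
            · exact hOr₀.2 (w 0) (w b) (Or.inr hst2) (Or.inr hst)
            · have hB : ∀ e ∈ ({e : V × V | ∃ p ∈ X₀, e = (w p.1, w p.2)} : Set (V × V)),
                  e.2 = w 0 := by
                intro e he
                obtain ⟨h1, h2⟩ := hvert e he
                rcases h2 with h2 | h2
                · exact h2
                · rcases h1 with h1 | h1
                  · exfalso
                    apply hst2
                    have hE : e = (w 0, w b) := Prod.ext_iff.mpr ⟨h1, h2⟩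
                    rw [← hE]
                    exact he
                  · exfalso
                    apply hOr₀.1 (w b)
                    have hE : e = (w b, w b) := Prod.ext_iff.mpr ⟨h1, h2⟩
                    rw [← hE]
                    exact Or.inr he
              rcases reach_sink hB (hX₀r a b har hbr) with h | h
              · exact HST h
              · exact HST ((hS a 0 le_rfl (Nat.zero_le a)).1.trans h)
          · have hB : ∀ e ∈ ({e : V × V | ∃ p ∈ X₀, e = (w p.1, w p.2)} : Set (V × V)),
                e.1 = w 0 := by
              intro e he
              obtain ⟨h1, h2⟩ := hvert e he
              rcases h1 with h1 | h1
              · exact h1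
              · rcases h2 with h2 | h2
                · exfalso
                  apply hst
                  have hE : e = (w b, w 0) := Prod.ext_iff.mpr ⟨h1, h2⟩
                  rw [← hE]
                  exact he
                · exfalso
                  apply hOr₀.1 (w b)
                  have hE : e = (w b, w b) := Prod.ext_iff.mpr ⟨h1, h2⟩
                  rw [← hE]
                  exact Or.inr he
            exact HTS (reach_to_src hB (hX₀r b 0 hbr h0r))
end

section
/- Let D be a digraph, k a positive integer, and let D' be obtained from D by subdividing every arc into a path of length k+1 and, for each allowed new arc (u,v) from a prescribed set Y, adding a new vertex x_{(u,v)} with arc (x_{(u,v)}, u), a length-(k+1) directed path from a fixed vertex s_{(u,v)} to x_{(u,v)}, and a length-(k+1) directed path from x_{(u,v)} to v, where s_{(u,v)} has (in D) a directed path to both u and v. Then D' has a dijoin of size at most k (a set Z of arcs whose reversals added to D' make it strongly connected) if and only if D + X is strongly connected for some X ⊆ Y with |X| ≤ k. -/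
/-- Vertices of the reduction digraph `D'`: original vertices, internal vertices of the
`(k+1)`-subdivision of each arc `e` (indexed by `e` and a position), and for each candidate
new arc `y` the gadget vertices: `x_y` (`Sum.inl none`), the internal vertices of the
directed path from `s_y` to `x_y` (`Sum.inl (some i)`), and the internal vertices of the
directed path from `x_y` to the head of `y` (`Sum.inr i`). -/
abbrev GVert (V : Type*) : Type _ :=
  V ⊕ ((V × V) × ℕ) ⊕ ((V × V) × (Option ℕ ⊕ ℕ))

/-- The `i`-th vertex (for `0 ≤ i ≤ k+1`) of the `(k+1)`-subdivision of the arc `e`. -/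
def subNode {V : Type*} (k : ℕ) (e : V × V) (i : ℕ) : GVert V :=
  if i = 0 then Sum.inl e.1 else if i = k + 1 then Sum.inl e.2
  else Sum.inr (Sum.inl (e, i - 1))

/-- The new vertex `x_y` associated with the candidate arc `y`. -/
def xNode {V : Type*} (y : V × V) : GVert V := Sum.inr (Sum.inr (y, Sum.inl none))

/-- The `i`-th vertex (for `0 ≤ i ≤ k+1`) of the length-`(k+1)` directed path from
`s = s_y` to `x_y`. -/
def sNode {V : Type*} (k : ℕ) (s : V) (y : V × V) (i : ℕ) : GVert V :=
  if i = 0 then Sum.inl s else if i = k + 1 then xNode y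
  else Sum.inr (Sum.inr (y, Sum.inl (some (i - 1))))

/-- The `i`-th vertex (for `0 ≤ i ≤ k+1`) of the length-`(k+1)` directed path from `x_y`
to the head `y.2` of the candidate arc `y`. -/
def vNode {V : Type*} (k : ℕ) (y : V × V) (i : ℕ) : GVert V :=
  if i = 0 then xNode y else if i = k + 1 then Sum.inl y.2
  else Sum.inr (Sum.inr (y, Sum.inr (i - 1)))

/-- The arcs of the reduction digraph `D'`: the `(k+1)`-subdivision of every arc of `D`,
the directed paths `s_y → x_y` and `x_y → y.2` of length `k+1`, and the arc `(x_y, y.1)`,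
for every candidate new arc `y ∈ Y`. -/
def redArcs {V : Type*} (A Y : Set (V × V)) (s : V × V → V) (k : ℕ) :
    Set (GVert V × GVert V) :=
  {p | ∃ e ∈ A, ∃ i ≤ k, p = (subNode k e i, subNode k e (i + 1))} ∪
  {p | ∃ y ∈ Y, ∃ i ≤ k, p = (sNode k (s y) y i, sNode k (s y) y (i + 1))} ∪
  {p | ∃ y ∈ Y, ∃ i ≤ k, p = (vNode k y i, vNode k y (i + 1))} ∪
  {p | ∃ y ∈ Y, p = (xNode y, Sum.inl y.1)}

/-- The actual vertices of the reduction digraph `D'` (the type `GVert V` also contains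
unused junk vertices). -/
def redVerts {V : Type*} (A Y : Set (V × V)) (s : V × V → V) (k : ℕ) : Set (GVert V) :=
  {v | ∃ x : V, v = Sum.inl x} ∪
  {v | ∃ e ∈ A, ∃ i ≤ k + 1, v = subNode k e i} ∪
  {v | ∃ y ∈ Y, ∃ i ≤ k + 1, v = sNode k (s y) y i} ∪
  {v | ∃ y ∈ Y, ∃ i ≤ k + 1, v = vNode k y i}

namespace Stmt17Aux

open Classical

variable {V : Type*}

/-- The `i`-th arc of the subdivision path of `e`. -/
def aSub (k : ℕ) (e : V × V) (i : ℕ) : GVert V × GVert V :=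
  (subNode k e i, subNode k e (i + 1))

/-- The `i`-th arc of the path from `s_y` to `x_y`. -/
def aS (k : ℕ) (s0 : V) (y : V × V) (i : ℕ) : GVert V × GVert V :=
  (sNode k s0 y i, sNode k s0 y (i + 1))

/-- The `i`-th arc of the path from `x_y` to `y.2`. -/
def aV (k : ℕ) (y : V × V) (i : ℕ) : GVert V × GVert V :=
  (vNode k y i, vNode k y (i + 1))

/-- The arc `(x_y, y.1)`. -/
def aXa (y : V × V) : GVert V × GVert V := (xNode y, Sum.inl y.1)

/-- All arcs of the subdivision path of `e` from position `i` on lie in `Z`. -/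
def CSub (k : ℕ) (Z : Set (GVert V × GVert V)) (e : V × V) (i : ℕ) : Prop :=
  ∀ j, i ≤ j → j ≤ k → aSub k e j ∈ Z

def CS (k : ℕ) (s0 : V) (Z : Set (GVert V × GVert V)) (y : V × V) (i : ℕ) : Prop :=
  ∀ j, i ≤ j → j ≤ k → aS k s0 y j ∈ Z

def CV (k : ℕ) (Z : Set (GVert V × GVert V)) (y : V × V) (i : ℕ) : Prop :=
  ∀ j, i ≤ j → j ≤ k → aV k y j ∈ Z

open Classical in
/-- Projection of the gadget digraph back to `V`, adapted to the dijoin `Z`. -/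
noncomputable def phi (s : V × V → V) (k : ℕ) (Z : Set (GVert V × GVert V)) :
    GVert V → V
  | Sum.inl v => v
  | Sum.inr (Sum.inl (e, j)) => if CSub k Z e (j + 1) then e.2 else e.1
  | Sum.inr (Sum.inr (y, Sum.inl none)) => if aXa y ∈ Z then y.1 else s y
  | Sum.inr (Sum.inr (y, Sum.inl (some j))) =>
      if aXa y ∈ Z ∧ CS k (s y) Z y (j + 1) then y.1 else s y
  | Sum.inr (Sum.inr (y, Sum.inr j)) =>
      if CV k Z y (j + 1) then y.2 else if aXa y ∈ Z then y.1 else s y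

section nodes

variable {s : V × V → V} {s0 : V} {k : ℕ} {Z : Set (GVert V × GVert V)}
  {e y : V × V} {i : ℕ}

lemma subNode_zero : subNode k e 0 = Sum.inl e.1 := by simp [subNode]

lemma subNode_top : subNode k e (k + 1) = Sum.inl e.2 := by simp [subNode]

lemma subNode_mid (h1 : i ≠ 0) (h2 : i ≠ k + 1) :
    subNode k e i = Sum.inr (Sum.inl (e, i - 1)) := by simp [subNode, h1, h2]

lemma sNode_zero : sNode k s0 y 0 = Sum.inl s0 := by simp [sNode]

lemma sNode_top : sNode k s0 y (k + 1) = xNode y := by simp [sNode]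

lemma sNode_mid (h1 : i ≠ 0) (h2 : i ≠ k + 1) :
    sNode k s0 y i = Sum.inr (Sum.inr (y, Sum.inl (some (i - 1)))) := by
  simp [sNode, h1, h2]

lemma vNode_zero : vNode k y 0 = xNode y := by simp [vNode]

lemma vNode_top : vNode k y (k + 1) = Sum.inl y.2 := by simp [vNode]

lemma vNode_mid (h1 : i ≠ 0) (h2 : i ≠ k + 1) :
    vNode k y i = Sum.inr (Sum.inr (y, Sum.inr (i - 1))) := by simp [vNode, h1, h2]

lemma phi_inl {v : V} : phi s k Z (Sum.inl v) = v := rfl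

lemma phi_x : phi s k Z (xNode y) = if aXa y ∈ Z then y.1 else s y := rfl

lemma phi_sub_mid (h1 : i ≠ 0) (h2 : i ≤ k) :
    phi s k Z (subNode k e i) = if CSub k Z e i then e.2 else e.1 := by
  rw [subNode_mid h1 (by omega)]
  have h3 : i - 1 + 1 = i := by omega
  simp only [phi, h3]

lemma phi_s_mid (h1 : i ≠ 0) (h2 : i ≤ k) :
    phi s k Z (sNode k s0 y i) =
      if aXa y ∈ Z ∧ CS k (s y) Z y i then y.1 else s y := by
  rw [sNode_mid h1 (by omega)]
  have h3 : i - 1 + 1 = i := by omega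
  simp only [phi, h3]

lemma phi_v_mid (h1 : i ≠ 0) (h2 : i ≤ k) :
    phi s k Z (vNode k y i) =
      if CV k Z y i then y.2 else if aXa y ∈ Z then y.1 else s y := by
  rw [vNode_mid h1 (by omega)]
  have h3 : i - 1 + 1 = i := by omega
  simp only [phi, h3]

lemma subNode_inj {j : ℕ} (h : i ≤ k) (h' : j ≤ k)
    (heq : subNode k e i = subNode k e j) : i = j := by
  unfold subNode at heq
  split_ifs at heq <;> simp_all <;> omega

lemma sNode_inj {j : ℕ} (h : i ≤ k) (h' : j ≤ k)
    (heq : sNode k s0 y i = sNode k s0 y j) : i = j := by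
  unfold sNode xNode at heq
  split_ifs at heq <;> simp_all <;> omega

lemma vNode_inj {j : ℕ} (h : i ≤ k) (h' : j ≤ k)
    (heq : vNode k y i = vNode k y j) : i = j := by
  unfold vNode xNode at heq
  split_ifs at heq <;> simp_all <;> omega

end nodes

lemma not_all_mem {k : ℕ} (Z : Finset (GVert V × GVert V)) (hZc : Z.card ≤ k)
    (f : ℕ → GVert V × GVert V)
    (hinj : ∀ i ≤ k, ∀ j ≤ k, f i = f j → i = j)
    (hall : ∀ j ≤ k, f j ∈ Z) : False := by
  classical
  have h1 : (Finset.range (k + 1)).card ≤ Z.card := by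
    apply Finset.card_le_card_of_injOn f
    · intro a ha
      exact hall a (Nat.lt_succ_iff.mp (Finset.mem_range.mp ha))
    · intro a ha b hb hab
      exact hinj a (Nat.lt_succ_iff.mp (Finset.mem_range.mp ha)) b
        (Nat.lt_succ_iff.mp (Finset.mem_range.mp hb)) hab
  rw [Finset.card_range] at h1
  omega

section main

variable {A Y : Set (V × V)} {s : V × V → V} {k : ℕ}

lemma reach_map {α β : Type*} {S : Set (α × α)} {R : Set (β × β)} (φ : α → β)
    (hφ : ∀ p q, (p, q) ∈ S → Reach R (φ p) (φ q)) {u v : α}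
    (h : Reach S u v) : Reach R (φ u) (φ v) := by
  induction h with
  | refl => exact Relation.ReflTransGen.refl
  | tail _ h2 ih => exact ih.trans (hφ _ _ h2)

lemma subFwd (hk : 0 < k) {Z : Set (GVert V × GVert V)} {X : Set (V × V)}
    {e : V × V} {i : ℕ} (he : e ∈ A) (hik : i ≤ k) :
    Reach (A ∪ X) (phi s k Z (subNode k e i)) (phi s k Z (subNode k e (i + 1))) := by
  have hA : Reach (A ∪ X) e.1 e.2 :=
    Relation.ReflTransGen.single (Set.mem_union_left _ he)
  by_cases hi0 : i = 0
  · subst hi0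
    rw [subNode_zero, phi_inl, phi_sub_mid (by omega) (by omega)]
    split_ifs with h
    · exact hA
    · exact .refl
  · by_cases hik' : i = k
    · subst hik'
      rw [subNode_top, phi_inl, phi_sub_mid hi0 le_rfl]
      split_ifs with h
      · exact .refl
      · exact hA
    · rw [phi_sub_mid hi0 hik, phi_sub_mid (by omega) (by omega)]
      by_cases h1 : CSub k Z e i
      · have h2 : CSub k Z e (i + 1) := by
          intro j hj hjk; exact h1 j (by omega) hjk
        rw [if_pos h1, if_pos h2]
        exact Relation.ReflTransGen.refl
      · rw [if_neg h1]
        split_ifs with h2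
        · exact hA
        · exact .refl

lemma subRev (hk : 0 < k) (Z : Finset (GVert V × GVert V)) (hZc : Z.card ≤ k)
    {X : Set (V × V)} {e : V × V} {i : ℕ} (hik : i ≤ k) (hz : aSub k e i ∈ Z) :
    Reach (A ∪ X) (phi s k (↑Z) (subNode k e (i + 1))) (phi s k (↑Z) (subNode k e i)) := by
  have hnot : ¬ CSub k (↑Z : Set (GVert V × GVert V)) e 0 := by
    intro h
    exact not_all_mem Z hZc (aSub k e)
      (fun a ha b hb hab => subNode_inj ha hb (congrArg Prod.fst hab))
      (fun j hj => h j (Nat.zero_le _) hj)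
  by_cases hik' : i = k
  · subst hik'
    have hC : CSub i (↑Z : Set (GVert V × GVert V)) e i := by
      intro j hj hjk
      have hj' : j = i := le_antisymm hjk hj
      subst hj'; exact hz
    rw [subNode_top, phi_inl, phi_sub_mid (by omega) le_rfl, if_pos hC]
    exact Relation.ReflTransGen.refl
  · rw [phi_sub_mid (by omega) (by omega)]
    by_cases h1 : CSub k (↑Z : Set (GVert V × GVert V)) e (i + 1)
    · have h0 : CSub k (↑Z : Set (GVert V × GVert V)) e i := by
        intro j hj hjk
        rcases eq_or_lt_of_le hj with rfl | hlt
        · exact hz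
        · exact h1 j (by omega) hjk
      by_cases hi0 : i = 0
      · exact absurd (hi0 ▸ h0) hnot
      · rw [if_pos h1, phi_sub_mid hi0 (by omega), if_pos h0]
        exact Relation.ReflTransGen.refl
    · rw [if_neg h1]
      by_cases hi0 : i = 0
      · rw [hi0, subNode_zero, phi_inl]
        exact Relation.ReflTransGen.refl
      · have hn : ¬ CSub k (↑Z : Set (GVert V × GVert V)) e i := by
          intro h; exact h1 (by intro j hj hjk; exact h j (by omega) hjk)
        rw [phi_sub_mid hi0 (by omega), if_neg hn]
        exact Relation.ReflTransGen.refl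

lemma sFwd (hk : 0 < k) {Z : Set (GVert V × GVert V)} {X : Set (V × V)}
    {y : V × V} {i : ℕ} (hs1 : Reach (A ∪ X) (s y) y.1) (hik : i ≤ k) :
    Reach (A ∪ X) (phi s k Z (sNode k (s y) y i)) (phi s k Z (sNode k (s y) y (i + 1))) := by
  by_cases hi0 : i = 0
  · subst hi0
    rw [sNode_zero, phi_inl, phi_s_mid (by omega) (by omega)]
    split_ifs with h
    · exact hs1
    · exact .refl
  · by_cases hik' : i = k
    · subst hik'
      rw [sNode_top, phi_x, phi_s_mid hi0 le_rfl]
      by_cases hx : aXa y ∈ Z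
      · rw [if_pos hx]
        split_ifs with h
        · exact .refl
        · exact hs1
      · rw [if_neg hx, if_neg (fun h => hx h.1)]
        exact Relation.ReflTransGen.refl
    · rw [phi_s_mid hi0 hik, phi_s_mid (by omega) (by omega)]
      by_cases h1 : aXa y ∈ Z ∧ CS k (s y) Z y i
      · have h2 : aXa y ∈ Z ∧ CS k (s y) Z y (i + 1) :=
          ⟨h1.1, by intro j hj hjk; exact h1.2 j (by omega) hjk⟩
        rw [if_pos h1, if_pos h2]
        exact Relation.ReflTransGen.refl
      · rw [if_neg h1]
        split_ifs with h2
        · exact hs1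
        · exact .refl

lemma sRev (hk : 0 < k) (Z : Finset (GVert V × GVert V)) (hZc : Z.card ≤ k)
    {X : Set (V × V)} {y : V × V} {i : ℕ} (hik : i ≤ k) (hz : aS k (s y) y i ∈ Z) :
    Reach (A ∪ X) (phi s k (↑Z) (sNode k (s y) y (i + 1))) (phi s k (↑Z) (sNode k (s y) y i)) := by
  have hnot : ¬ CS k (s y) (↑Z : Set (GVert V × GVert V)) y 0 := by
    intro h
    exact not_all_mem Z hZc (aS k (s y) y)
      (fun a ha b hb hab => sNode_inj ha hb (congrArg Prod.fst hab))
      (fun j hj => h j (Nat.zero_le _) hj)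
  by_cases hik' : i = k
  · subst hik'
    have hC : CS i (s y) (↑Z : Set (GVert V × GVert V)) y i := by
      intro j hj hjk
      have hj' : j = i := le_antisymm hjk hj
      subst hj'; exact hz
    rw [sNode_top, phi_x, phi_s_mid (by omega) le_rfl]
    by_cases hx : aXa y ∈ (↑Z : Set (GVert V × GVert V))
    · rw [if_pos hx, if_pos ⟨hx, hC⟩]
      exact Relation.ReflTransGen.refl
    · rw [if_neg hx, if_neg (fun h => hx h.1)]
      exact Relation.ReflTransGen.refl
  · rw [phi_s_mid (by omega) (by omega)]
    by_cases h1 : aXa y ∈ (↑Z : Set (GVert V × GVert V)) ∧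
        CS k (s y) (↑Z : Set (GVert V × GVert V)) y (i + 1)
    · have h0 : CS k (s y) (↑Z : Set (GVert V × GVert V)) y i := by
        intro j hj hjk
        rcases eq_or_lt_of_le hj with rfl | hlt
        · exact hz
        · exact h1.2 j (by omega) hjk
      by_cases hi0 : i = 0
      · exact absurd (hi0 ▸ h0) hnot
      · rw [if_pos h1, phi_s_mid hi0 (by omega), if_pos ⟨h1.1, h0⟩]
        exact Relation.ReflTransGen.refl
    · rw [if_neg h1]
      by_cases hi0 : i = 0
      · rw [hi0, sNode_zero, phi_inl]
        exact Relation.ReflTransGen.refl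
      · have hn : ¬ (aXa y ∈ (↑Z : Set (GVert V × GVert V)) ∧
            CS k (s y) (↑Z : Set (GVert V × GVert V)) y i) := by
          intro h
          exact h1 ⟨h.1, by intro j hj hjk; exact h.2 j (by omega) hjk⟩
        rw [phi_s_mid hi0 (by omega), if_neg hn]
        exact Relation.ReflTransGen.refl

lemma vFwd (hk : 0 < k) {Z : Set (GVert V × GVert V)} {X : Set (V × V)}
    {y : V × V} {i : ℕ} (hs2 : Reach (A ∪ X) (s y) y.2)
    (hXy : aXa y ∈ Z → Reach (A ∪ X) y.1 y.2) (hik : i ≤ k) :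
    Reach (A ∪ X) (phi s k Z (vNode k y i)) (phi s k Z (vNode k y (i + 1))) := by
  by_cases hi0 : i = 0
  · subst hi0
    rw [vNode_zero, phi_x, phi_v_mid (by omega) (by omega)]
    by_cases hx : aXa y ∈ Z
    · rw [if_pos hx]
      split_ifs with h
      · exact hXy hx
      · exact .refl
    · rw [if_neg hx]
      split_ifs with h
      · exact hs2
      · exact .refl
  · by_cases hik' : i = k
    · subst hik'
      rw [vNode_top, phi_inl, phi_v_mid hi0 le_rfl]
      split_ifs with h1 h2
      · exact .refl
      · exact hXy h2
      · exact hs2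
    · rw [phi_v_mid hi0 hik, phi_v_mid (by omega) (by omega)]
      by_cases h1 : CV k Z y i
      · have h2 : CV k Z y (i + 1) := by
          intro j hj hjk; exact h1 j (by omega) hjk
        rw [if_pos h1, if_pos h2]
        exact Relation.ReflTransGen.refl
      · rw [if_neg h1]
        by_cases h2 : CV k Z y (i + 1)
        · rw [if_pos h2]
          split_ifs with hx
          · exact hXy hx
          · exact hs2
        · rw [if_neg h2]
          exact Relation.ReflTransGen.refl

lemma vRev (hk : 0 < k) (Z : Finset (GVert V × GVert V)) (hZc : Z.card ≤ k)
    {X : Set (V × V)} {y : V × V} {i : ℕ} (hik : i ≤ k) (hz : aV k y i ∈ Z) :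
    Reach (A ∪ X) (phi s k (↑Z) (vNode k y (i + 1))) (phi s k (↑Z) (vNode k y i)) := by
  have hnot : ¬ CV k (↑Z : Set (GVert V × GVert V)) y 0 := by
    intro h
    exact not_all_mem Z hZc (aV k y)
      (fun a ha b hb hab => vNode_inj ha hb (congrArg Prod.fst hab))
      (fun j hj => h j (Nat.zero_le _) hj)
  by_cases hik' : i = k
  · subst hik'
    have hC : CV i (↑Z : Set (GVert V × GVert V)) y i := by
      intro j hj hjk
      have hj' : j = i := le_antisymm hjk hj
      subst hj'; exact hz
    rw [vNode_top, phi_inl, phi_v_mid (by omega) le_rfl, if_pos hC]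
    exact Relation.ReflTransGen.refl
  · rw [phi_v_mid (by omega) (by omega)]
    by_cases h1 : CV k (↑Z : Set (GVert V × GVert V)) y (i + 1)
    · have h0 : CV k (↑Z : Set (GVert V × GVert V)) y i := by
        intro j hj hjk
        rcases eq_or_lt_of_le hj with rfl | hlt
        · exact hz
        · exact h1 j (by omega) hjk
      by_cases hi0 : i = 0
      · exact absurd (hi0 ▸ h0) hnot
      · rw [if_pos h1, phi_v_mid hi0 (by omega), if_pos h0]
        exact Relation.ReflTransGen.refl
    · rw [if_neg h1]
      by_cases hi0 : i = 0
      · rw [hi0, vNode_zero, phi_x]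
        exact Relation.ReflTransGen.refl
      · have hn : ¬ CV k (↑Z : Set (GVert V × GVert V)) y i := by
          intro h; exact h1 (by intro j hj hjk; exact h j (by omega) hjk)
        rw [phi_v_mid hi0 (by omega), if_neg hn]
        exact Relation.ReflTransGen.refl

lemma arcStep [Fintype V] (hk : 0 < k)
    (hs : ∀ y ∈ Y, Reach A (s y) y.1 ∧ Reach A (s y) y.2)
    (Z : Finset (GVert V × GVert V)) (hZA : (↑Z : Set (GVert V × GVert V)) ⊆ redArcs A Y s k)
    (hZc : Z.card ≤ k) (X : Set (V × V))
    (hXdef : ∀ y, y ∈ Y → aXa y ∈ Z → (y.1, y.2) ∈ X)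
    {p q : GVert V}
    (hpq : (p, q) ∈ redArcs A Y s k ∪ {r : GVert V × GVert V | (r.2, r.1) ∈ Z}) :
    Reach (A ∪ X) (phi s k (↑Z) p) (phi s k (↑Z) q) := by
  classical
  have hs1 : ∀ y ∈ Y, Reach (A ∪ X) (s y) y.1 := fun y hy =>
    by have h0 := (hs y hy).1; unfold Reach at h0 ⊢; exact Relation.ReflTransGen.mono (fun a b (hx : (a, b) ∈ A) => (Set.mem_union_left X hx : (a, b) ∈ A ∪ X)) _ _ h0
  have hs2 : ∀ y ∈ Y, Reach (A ∪ X) (s y) y.2 := fun y hy =>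
    by have h0 := (hs y hy).2; unfold Reach at h0 ⊢; exact Relation.ReflTransGen.mono (fun a b (hx : (a, b) ∈ A) => (Set.mem_union_left X hx : (a, b) ∈ A ∪ X)) _ _ h0
  have hXr : ∀ y, y ∈ Y → aXa y ∈ (↑Z : Set (GVert V × GVert V)) →
      Reach (A ∪ X) y.1 y.2 := fun y hy hz =>
    Relation.ReflTransGen.single (Set.mem_union_right _ (hXdef y hy hz))
  rcases hpq with h | h
  · simp only [redArcs, Set.mem_union, Set.mem_setOf_eq] at h
    rcases h with (((⟨e, he, i, hik, heq⟩ | ⟨y, hy, i, hik, heq⟩) |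
        ⟨y, hy, i, hik, heq⟩) | ⟨y, hy, heq⟩)
    · injection heq with hp hq; subst hp; subst hq
      exact subFwd hk he hik
    · injection heq with hp hq; subst hp; subst hq
      exact sFwd hk (hs1 y hy) hik
    · injection heq with hp hq; subst hp; subst hq
      exact vFwd hk (hs2 y hy) (hXr y hy) hik
    · injection heq with hp hq; subst hp; subst hq
      rw [phi_x, phi_inl]
      split_ifs with hx
      · exact .refl
      · exact hs1 y hy
  · have h' : (q, p) ∈ Z := h
    have hm := hZA (Finset.mem_coe.mpr h')
    simp only [redArcs, Set.mem_union, Set.mem_setOf_eq] at hm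
    rcases hm with (((⟨e, he, i, hik, heq⟩ | ⟨y, hy, i, hik, heq⟩) |
        ⟨y, hy, i, hik, heq⟩) | ⟨y, hy, heq⟩)
    · injection heq with hq hp; subst hq; subst hp
      exact subRev hk Z hZc hik h'
    · injection heq with hq hp; subst hq; subst hp
      exact sRev hk Z hZc hik h'
    · injection heq with hq hp; subst hq; subst hp
      exact vRev hk Z hZc hik h'
    · injection heq with hq hp; subst hq; subst hp
      rw [phi_inl, phi_x,
        if_pos (show aXa y ∈ (↑Z : Set (GVert V × GVert V)) from h')]
      exact Relation.ReflTransGen.refl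

lemma reach_chain {S : Set (GVert V × GVert V)} (f : ℕ → GVert V) {i m : ℕ}
    (him : i ≤ m) (hstep : ∀ j, i ≤ j → j < m → (f j, f (j + 1)) ∈ S) :
    Reach S (f i) (f m) := by
  induction m, him using Nat.le_induction with
  | base => exact .refl
  | succ m hm ih =>
    exact (ih (fun j hj hjm => hstep j hj (by omega))).tail (hstep m hm (by omega))

lemma reachSub {S : Set (GVert V × GVert V)} (hS : redArcs A Y s k ⊆ S)
    {e : V × V} (he : e ∈ A) {i j : ℕ} (hij : i ≤ j) (hj : j ≤ k + 1) :
    Reach S (subNode k e i) (subNode k e j) :=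
  reach_chain (subNode k e) hij (fun l _ hlm =>
    hS (Set.mem_union_left _ (Set.mem_union_left _ (Set.mem_union_left _
      ⟨e, he, l, by omega, rfl⟩))))

lemma reachS {S : Set (GVert V × GVert V)} (hS : redArcs A Y s k ⊆ S)
    {y : V × V} (hy : y ∈ Y) {i j : ℕ} (hij : i ≤ j) (hj : j ≤ k + 1) :
    Reach S (sNode k (s y) y i) (sNode k (s y) y j) :=
  reach_chain (sNode k (s y) y) hij (fun l _ hlm =>
    hS (Set.mem_union_left _ (Set.mem_union_left _ (Set.mem_union_right _
      ⟨y, hy, l, by omega, rfl⟩))))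

lemma reachV {S : Set (GVert V × GVert V)} (hS : redArcs A Y s k ⊆ S)
    {y : V × V} (hy : y ∈ Y) {i j : ℕ} (hij : i ≤ j) (hj : j ≤ k + 1) :
    Reach S (vNode k y i) (vNode k y j) :=
  reach_chain (vNode k y) hij (fun l _ hlm =>
    hS (Set.mem_union_left _ (Set.mem_union_right _
      ⟨y, hy, l, by omega, rfl⟩)))

end main

end Stmt17Aux

/-- Dijoin reduction: `D'` (built from `D` by `(k+1)`-subdividing every arc and adding, for
every allowed new arc `y = (u, v) ∈ Y`, a vertex `x_y` with the arc `(x_y, u)`, a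
length-`(k+1)` path from `s_y` to `x_y`, and a length-`(k+1)` path from `x_y` to `v`, where
`s_y` reaches both `u` and `v` in `D`) has a dijoin of size at most `k` iff `D + X` is
strongly connected for some `X ⊆ Y` with `|X| ≤ k`. -/
theorem stmt17 {V : Type*} [Fintype V] (A Y : Set (V × V)) (s : V × V → V)
    (k : ℕ) (hk : 0 < k)
    (hs : ∀ y ∈ Y, Reach A (s y) y.1 ∧ Reach A (s y) y.2) :
    (∃ Z : Finset (GVert V × GVert V), (↑Z : Set (GVert V × GVert V)) ⊆ redArcs A Y s k ∧
      Z.card ≤ k ∧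
      ∀ u ∈ redVerts A Y s k, ∀ v ∈ redVerts A Y s k,
        Reach (redArcs A Y s k ∪ {p | (p.2, p.1) ∈ Z}) u v) ↔
    (∃ X : Finset (V × V), (↑X : Set (V × V)) ⊆ Y ∧ X.card ≤ k ∧
      Strong (A ∪ (↑X : Set (V × V)))) := by
  classical
  constructor
  · rintro ⟨Z, hZA, hZc, hreach⟩
    refine ⟨Finset.univ.filter (fun y => y ∈ Y ∧ Stmt17Aux.aXa y ∈ Z), ?_, ?_, ?_⟩
    · intro y hy
      exact (Finset.mem_filter.mp (Finset.mem_coe.mp hy)).2.1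
    · refine le_trans (Finset.card_le_card_of_injOn Stmt17Aux.aXa
        (fun y hy => (Finset.mem_filter.mp hy).2.2) ?_) hZc
      intro a _ b _ h
      have h1 := congrArg Prod.fst h
      simpa [Stmt17Aux.aXa, xNode] using h1
    · intro u v
      have hin : ∀ w : V, Sum.inl w ∈ redVerts A Y s k := fun w =>
        Set.mem_union_left _ (Set.mem_union_left _ (Set.mem_union_left _ ⟨w, rfl⟩))
      have h := hreach (Sum.inl u) (hin u) (Sum.inl v) (hin v)
      have hXd : ∀ y, y ∈ Y → Stmt17Aux.aXa y ∈ Z → (y.1, y.2) ∈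
          (↑(Finset.univ.filter (fun y => y ∈ Y ∧ Stmt17Aux.aXa y ∈ Z)) : Set (V × V)) := by
        intro y hy hz
        exact Finset.mem_coe.mpr (Finset.mem_filter.mpr ⟨Finset.mem_univ _, hy, hz⟩)
      have h2 := Stmt17Aux.reach_map (Stmt17Aux.phi s k (↑Z))
        (fun p q hpq => Stmt17Aux.arcStep hk hs Z hZA hZc _ hXd hpq) h
      exact h2
  · rintro ⟨X, hXY, hXc, hstrong⟩
    refine ⟨X.image Stmt17Aux.aXa, ?_, Finset.card_image_le.trans hXc, ?_⟩
    · intro p hp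
      simp only [Finset.coe_image, Set.mem_image, Finset.mem_coe] at hp
      obtain ⟨y, hy, rfl⟩ := hp
      exact Set.mem_union_right _ ⟨y, hXY hy, rfl⟩
    · set Z := X.image Stmt17Aux.aXa with hZ
      set S := redArcs A Y s k ∪ {p : GVert V × GVert V | (p.2, p.1) ∈ Z} with hS
      have hsub : redArcs A Y s k ⊆ S := Set.subset_union_left
      have hstep : ∀ a b : V, (a, b) ∈ A ∪ (↑X : Set (V × V)) →
          Reach S (Sum.inl a) (Sum.inl b) := by
        intro a b hab
        rcases hab with hab | hab
        · have h1 := Stmt17Aux.reachSub (s := s) hsub hab (Nat.zero_le (k + 1)) le_rfl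
          simpa [Stmt17Aux.subNode_zero, Stmt17Aux.subNode_top] using h1
        · have h1 : Reach S (Sum.inl a) (xNode (a, b)) := by
            refine Relation.ReflTransGen.single (Set.mem_union_right _ ?_)
            simp only [Set.mem_setOf_eq]
            exact Finset.mem_image_of_mem _ (Finset.mem_coe.mp hab)
          have h2 : Reach S (vNode k (a, b) 0) (vNode k (a, b) (k + 1)) :=
            Stmt17Aux.reachV (s := s) hsub (hXY hab) (Nat.zero_le _) le_rfl
          exact h1.trans
            (by simpa [Stmt17Aux.vNode_zero, Stmt17Aux.vNode_top, Reach] using h2)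
      have hlift : ∀ a b : V, Reach (A ∪ (↑X : Set (V × V))) a b →
          Reach S (Sum.inl a) (Sum.inl b) := by
        intro a b hr
        induction hr with
        | refl => exact .refl
        | @tail c d _ h2 ih => exact ih.trans (hstep c d h2)
      intro u hu v hv
      have hout : ∀ w, w ∈ redVerts A Y s k → ∃ a, Reach S w (Sum.inl a) := by
        intro w hw
        simp only [redVerts, Set.mem_union, Set.mem_setOf_eq] at hw
        rcases hw with (((⟨x, rfl⟩ | ⟨e, he, i, hik, rfl⟩) | ⟨y, hy, i, hik, rfl⟩) |
          ⟨y, hy, i, hik, rfl⟩)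
        · exact ⟨x, .refl⟩
        · exact ⟨e.2, by
            simpa [Stmt17Aux.subNode_top] using
              Stmt17Aux.reachSub (s := s) hsub he hik le_rfl⟩
        · refine ⟨y.1, Relation.ReflTransGen.tail (b := xNode y) ?_ ?_⟩
          · simpa [Stmt17Aux.sNode_top, Reach] using Stmt17Aux.reachS hsub hy hik le_rfl
          · exact hsub (Set.mem_union_right _ ⟨y, hy, rfl⟩)
        · exact ⟨y.2, by
            simpa [Stmt17Aux.vNode_top] using
              Stmt17Aux.reachV (s := s) hsub hy hik le_rfl⟩
      have hinto : ∀ w, w ∈ redVerts A Y s k → ∃ a, Reach S (Sum.inl a) w := by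
        intro w hw
        simp only [redVerts, Set.mem_union, Set.mem_setOf_eq] at hw
        rcases hw with (((⟨x, rfl⟩ | ⟨e, he, i, hik, rfl⟩) | ⟨y, hy, i, hik, rfl⟩) |
          ⟨y, hy, i, hik, rfl⟩)
        · exact ⟨x, .refl⟩
        · exact ⟨e.1, by
            simpa [Stmt17Aux.subNode_zero] using
              Stmt17Aux.reachSub (s := s) hsub he (Nat.zero_le i) hik⟩
        · exact ⟨s y, by
            simpa [Stmt17Aux.sNode_zero] using
              Stmt17Aux.reachS hsub hy (Nat.zero_le i) hik⟩
        · refine ⟨s y, Relation.ReflTransGen.trans (b := xNode y) ?_ ?_⟩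
          · simpa [Stmt17Aux.sNode_zero, Stmt17Aux.sNode_top, Reach] using
              Stmt17Aux.reachS hsub hy (Nat.zero_le (k + 1)) le_rfl
          · simpa [Stmt17Aux.vNode_zero, Reach] using
              Stmt17Aux.reachV (s := s) hsub hy (Nat.zero_le i) hik
      obtain ⟨a, ha⟩ := hout u hu
      obtain ⟨b, hb⟩ := hinto v hv
      exact ha.trans ((hlift a b (hstrong a b)).trans hb)
end

section
/- Every family H of functions from an n-element set of coordinates to an alphabet of size b that is an (n, k, b)-universal set (for every k coordinates and every assignment of values there is an h ∈ H realizing it) must have size at least b^k; conversely a uniformly random family of b^k · k · ln(n·b) independent uniform functions is (n,k,b)-universal with positive probability. -/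
/-- `H` is an `(n, k, b)`-universal set of functions `[n] → [b]`: for every choice of `k`
distinct coordinates and every assignment of values to them, some `h ∈ H` realizes it. -/
def IsUniversal (n k b : ℕ) (H : Finset (Fin n → Fin b)) : Prop :=
  ∀ idx : Fin k → Fin n, Function.Injective idx →
    ∀ val : Fin k → Fin b, ∃ h ∈ H, ∀ j : Fin k, h (idx j) = val j

lemma card_sat (n k b : ℕ) (idx : Fin k → Fin n) (hinj : Function.Injective idx)
    (val : Fin k → Fin b) :
    (Finset.univ.filter (fun g : Fin n → Fin b => ∀ j, g (idx j) = val j)).card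
      = b ^ (n - k) := by
  classical
  have hcard : Fintype.card {g : Fin n → Fin b // ∀ j, g (idx j) = val j}
      = b ^ (n - k) := by
    have e : {g : Fin n → Fin b // ∀ j, g (idx j) = val j}
        ≃ ({i : Fin n // ¬ ∃ j, idx j = i} → Fin b) :=
      { toFun := fun g i => g.1 i.1
        invFun := fun f => ⟨fun i => if h : ∃ j, idx j = i then val h.choose else f ⟨i, h⟩, by
          intro j
          have h : ∃ j', idx j' = idx j := ⟨j, rfl⟩
          simp only [dif_pos h]
          congr 1
          exact hinj h.choose_spec⟩
        left_inv := by
          intro g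
          apply Subtype.ext
          funext i
          simp only
          by_cases h : ∃ j, idx j = i
          · rw [dif_pos h]
            have := g.2 h.choose
            rw [h.choose_spec] at this
            exact this.symm
          · rw [dif_neg h]
        right_inv := by
          intro f
          ext i
          simp only [dif_neg i.2] }
    rw [Fintype.card_congr e, Fintype.card_fun, Fintype.card_fin]
    congr 1
    rw [Fintype.card_subtype_compl]
    have : Fintype.card {i : Fin n // ∃ j, idx j = i} = k := by
      have e2 : Fin k ≃ {i : Fin n // ∃ j, idx j = i} :=
        (Equiv.ofInjective idx hinj).trans (Equiv.subtypeEquivRight (by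
          intro x; simp [Set.mem_range]))
      rw [← Fintype.card_congr e2, Fintype.card_fin]
    rw [this, Fintype.card_fin]
  rw [← hcard, Fintype.card_subtype]

lemma key_ineq (n k b : ℕ) (hk : 1 ≤ k) (hkn : k ≤ n) (hb : 2 ≤ b) :
    (n ^ k * b ^ k) * (b ^ n - b ^ (n - k)) ^ (⌈(b : ℝ) ^ k * k * Real.log (n * b)⌉₊)
      < (b ^ n) ^ (⌈(b : ℝ) ^ k * k * Real.log (n * b)⌉₊) := by
  set m : ℕ := ⌈(b : ℝ) ^ k * k * Real.log (n * b)⌉₊ with hm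
  have hn1 : 1 ≤ n := le_trans hk hkn
  have hbR : (2:ℝ) ≤ (b:ℝ) := by exact_mod_cast hb
  have hnR : (1:ℝ) ≤ (n:ℝ) := by exact_mod_cast hn1
  have hnb1 : (1:ℝ) < (n:ℝ) * (b:ℝ) := by nlinarith
  have hlog : 0 < Real.log ((n:ℝ) * b) := Real.log_pos hnb1
  have hBpos : (0:ℝ) < (b:ℝ) ^ k := by positivity
  have hB1 : (1:ℝ) < (b:ℝ) ^ k := by
    calc (1:ℝ) < 2 := one_lt_two
    _ ≤ (b:ℝ) := hbR
    _ = (b:ℝ)^1 := (pow_one _).symm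
    _ ≤ (b:ℝ)^k := pow_le_pow_right₀ (by linarith) hk
  set t : ℝ := ((b:ℝ) ^ k)⁻¹ with ht
  have htpos : 0 < t := by positivity
  have ht1 : t < 1 := by
    rw [ht]; exact inv_lt_one_of_one_lt₀ hB1
  have hmpos : 0 < m := by
    rw [hm]
    apply Nat.ceil_pos.mpr
    have : (0:ℝ) < (k:ℝ) := by exact_mod_cast hk
    push_cast
    positivity
  have hxle : (b : ℝ) ^ k * k * Real.log (n * b) ≤ (m:ℝ) := Nat.le_ceil _
  -- cast goal to ℝ
  have hple : b ^ (n-k) ≤ b ^ n := Nat.pow_le_pow_right (by omega) (by omega)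
  rw [← Nat.cast_lt (α := ℝ)]
  push_cast [hple]
  have hbnk : (b:ℝ) ^ (n - k) = (b:ℝ) ^ n * t := by
    have hpa : (b:ℝ)^(n-k) * (b:ℝ)^k = (b:ℝ)^n := by
      rw [← pow_add]; congr 1; omega
    rw [ht]
    field_simp
    linarith [hpa]
  rw [hbnk]
  have hfact : (b:ℝ) ^ n - (b:ℝ) ^ n * t = (b:ℝ)^n * (1 - t) := by ring
  rw [hfact, mul_pow ((b:ℝ)^n)]
  have hbn : (0:ℝ) < ((b:ℝ)^n)^m := by positivity
  have hkey : ((n:ℝ) ^ k * (b:ℝ) ^ k) * (1 - t) ^ m < 1 := by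
    have h1 : (1 - t) ^ m < Real.exp (-t) ^ m := by
      apply pow_lt_pow_left₀ _ (by linarith) (by omega)
      have := Real.add_one_lt_exp (x := -t) (by linarith)
      linarith
    have h2 : Real.exp (-t) ^ m = Real.exp (-(t * m)) := by
      rw [← Real.exp_nat_mul]
      ring_nf
    have h3 : (k:ℝ) * Real.log ((n:ℝ) * b) ≤ t * m := by
      have := mul_le_mul_of_nonneg_right hxle (le_of_lt htpos)
      calc (k:ℝ) * Real.log ((n:ℝ)*b) = ((b:ℝ)^k * k * Real.log ((n:ℝ)*b)) * t := by
            rw [ht]; field_simp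
        _ ≤ (m:ℝ) * t := this
        _ = t * m := by ring
    have h4 : Real.exp (-(t*m)) ≤ Real.exp (-((k:ℝ) * Real.log ((n:ℝ)*b))) :=
      Real.exp_le_exp.mpr (by linarith)
    have h5 : Real.exp (-((k:ℝ) * Real.log ((n:ℝ)*b))) = (((n:ℝ)*b) ^ k)⁻¹ := by
      rw [Real.exp_neg]
      congr 1
      rw [← Real.rpow_natCast ((n:ℝ)*b) k, ← Real.exp_log (x := ((n:ℝ)*b)) (by linarith),
        ← Real.exp_mul]
      rw [Real.exp_log (by linarith)]
      ring_nf
    have hpow : (0:ℝ) < ((n:ℝ)*b)^k := by positivity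
    calc ((n:ℝ) ^ k * (b:ℝ) ^ k) * (1 - t) ^ m
        = ((n:ℝ)*b)^k * (1-t)^m := by rw [mul_pow]
      _ < ((n:ℝ)*b)^k * (((n:ℝ)*b) ^ k)⁻¹ := by
          apply mul_lt_mul_of_pos_left _ hpow
          calc (1-t)^m < Real.exp (-t) ^ m := h1
            _ = Real.exp (-(t*m)) := h2
            _ ≤ Real.exp (-((k:ℝ) * Real.log ((n:ℝ)*b))) := h4
            _ = (((n:ℝ)*b) ^ k)⁻¹ := h5
      _ = 1 := mul_inv_cancel₀ (ne_of_gt hpow)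
  calc (n:ℝ) ^ k * (b:ℝ) ^ k * (((b:ℝ)^n)^m * (1-t)^m)
      = (((n:ℝ) ^ k * (b:ℝ) ^ k) * (1-t)^m) * ((b:ℝ)^n)^m := by ring
    _ < 1 * ((b:ℝ)^n)^m := by
        apply mul_lt_mul_of_pos_right hkey hbn
    _ = ((b:ℝ)^n)^m := one_mul _


/-- Every `(n, k, b)`-universal set has size at least `b ^ k`; conversely there exists an
`(n, k, b)`-universal set of size at most `⌈b^k · k · ln(n·b)⌉` (obtained with positive
probability from that many independent uniformly random functions). -/
theorem stmt19 (n k b : ℕ) (hk : 1 ≤ k) (hkn : k ≤ n) (hb : 2 ≤ b) :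
    (∀ H : Finset (Fin n → Fin b), IsUniversal n k b H → b ^ k ≤ H.card) ∧
    (∃ H : Finset (Fin n → Fin b), IsUniversal n k b H ∧
      H.card ≤ ⌈(b : ℝ) ^ k * k * Real.log (n * b)⌉₊) := by
  classical
  constructor
  · intro H hH
    have hidx : Function.Injective (Fin.castLE hkn) := Fin.castLE_injective hkn
    have hsurj : Function.Surjective
        (fun h : {x // x ∈ H} => (fun j => h.1 (Fin.castLE hkn j))) := by
      intro val
      obtain ⟨h, hmem, hval⟩ := hH _ hidx val
      exact ⟨⟨h, hmem⟩, funext hval⟩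
    have hle := Fintype.card_le_of_surjective _ hsurj
    simpa [Fintype.card_fun, Fintype.card_coe] using hle
  · set m := ⌈(b : ℝ) ^ k * k * Real.log (n * b)⌉₊ with hm
    set C : Finset ((Fin k → Fin n) × (Fin k → Fin b)) :=
      Finset.univ.filter (fun c => Function.Injective c.1) with hC
    set Bc : (Fin k → Fin n) × (Fin k → Fin b) → Finset (Fin m → Fin n → Fin b) :=
      fun c => Finset.univ.filter (fun ω => ∀ i, ¬ ∀ j, ω i (c.1 j) = c.2 j) with hBcdef
    have hBc : ∀ c ∈ C, (Bc c).card = (b ^ n - b ^ (n - k)) ^ m := by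
      intro c hc
      have hcinj : Function.Injective c.1 := (Finset.mem_filter.mp hc).2
      have hpi : Bc c = Fintype.piFinset (fun _ : Fin m =>
          Finset.univ.filter (fun g : Fin n → Fin b => ¬ ∀ j, g (c.1 j) = c.2 j)) := by
        ext ω
        simp [hBcdef, Fintype.mem_piFinset]
      have hfail : (Finset.univ.filter
          (fun g : Fin n → Fin b => ¬ ∀ j, g (c.1 j) = c.2 j)).card
          = b ^ n - b ^ (n - k) := by
        rw [Finset.filter_not, Finset.card_sdiff_of_subset (Finset.filter_subset _ _),
          card_sat n k b c.1 hcinj c.2, Finset.card_univ]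
        simp [Fintype.card_fun]
      rw [hpi, Fintype.card_piFinset]
      simp only [Finset.prod_const, Finset.card_univ, Fintype.card_fin, hfail]
    set Bad : Finset (Fin m → Fin n → Fin b) := Finset.univ.filter
      (fun ω => ¬ IsUniversal n k b (Finset.image ω Finset.univ)) with hBad
    have hsub : Bad ⊆ C.biUnion Bc := by
      intro ω hω
      have hnu : ¬ IsUniversal n k b (Finset.image ω Finset.univ) :=
        (Finset.mem_filter.mp hω).2
      rw [IsUniversal] at hnu
      push_neg at hnu
      obtain ⟨idx, hinj, val, hval⟩ := hnu
      refine Finset.mem_biUnion.mpr ⟨(idx, val), ?_, ?_⟩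
      · exact Finset.mem_filter.mpr ⟨Finset.mem_univ _, hinj⟩
      · refine Finset.mem_filter.mpr ⟨Finset.mem_univ _, ?_⟩
        intro i hcontra
        obtain ⟨j, hj⟩ := hval (ω i) (Finset.mem_image_of_mem _ (Finset.mem_univ i))
        exact hj (hcontra j)
    have hCle : C.card ≤ n ^ k * b ^ k := by
      calc C.card ≤ (Finset.univ : Finset ((Fin k → Fin n) × (Fin k → Fin b))).card :=
            Finset.card_filter_le _ _
        _ = n ^ k * b ^ k := by simp [Fintype.card_fun]
    have hBadlt : Bad.card < Fintype.card (Fin m → Fin n → Fin b) := by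
      have h1 : Bad.card ≤ C.card * (b ^ n - b ^ (n - k)) ^ m := by
        calc Bad.card ≤ (C.biUnion Bc).card := Finset.card_le_card hsub
          _ ≤ ∑ c ∈ C, (Bc c).card := Finset.card_biUnion_le
          _ = ∑ _c ∈ C, (b ^ n - b ^ (n - k)) ^ m := Finset.sum_congr rfl hBc
          _ = C.card * (b ^ n - b ^ (n - k)) ^ m := by
              rw [Finset.sum_const, smul_eq_mul]
      have h2 : Fintype.card (Fin m → Fin n → Fin b) = (b ^ n) ^ m := by
        simp [Fintype.card_fun]
      calc Bad.card ≤ C.card * (b ^ n - b ^ (n - k)) ^ m := h1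
        _ ≤ (n ^ k * b ^ k) * (b ^ n - b ^ (n - k)) ^ m :=
            Nat.mul_le_mul_right _ hCle
        _ < (b ^ n) ^ m := key_ineq n k b hk hkn hb
        _ = Fintype.card (Fin m → Fin n → Fin b) := h2.symm
    have hex : ∃ ω : Fin m → Fin n → Fin b, ω ∉ Bad := by
      by_contra hcon
      push_neg at hcon
      have : (Finset.univ : Finset (Fin m → Fin n → Fin b)) ⊆ Bad :=
        fun ω _ => hcon ω
      have := Finset.card_le_card this
      rw [Finset.card_univ] at this
      omega
    obtain ⟨ω, hω⟩ := hex
    refine ⟨Finset.image ω Finset.univ, ?_, ?_⟩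
    · by_contra hcon
      exact hω (Finset.mem_filter.mpr ⟨Finset.mem_univ _, hcon⟩)
    · calc (Finset.image ω Finset.univ).card ≤ (Finset.univ : Finset (Fin m)).card :=
          Finset.card_image_le
        _ = m := by simp
end
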